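/- arXiv:math/0412116 — 7 statements merged into one kernel-verified Lean document; each statement's English description precedes it below -/
import Mathlib

section
/- Suppose −A₂₂ is maximal dissipative in H⁻, so that A₂₂ − λ : D(A₂₂) → H⁻ is bijective with bounded inverse for every λ ∈ ℂ⁺. If for some μ₀ ∈ ℂ⁺ the operator F(μ₀) = (A₂₂ − μ₀)⁻¹A₂₁, defined on D⁺, admits a bounded closure F̄(μ₀), then for every λ ∈ ℂ⁺ the operator F(λ) = (A₂₂ − λ)⁻¹A₂₁ admits a bounded closure, and its closure satisfies the identity F̄(λ) = F̄(μ₀) + (λ − μ₀)(A₂₂ − λ)⁻¹F̄(μ₀). -/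
/-- If `−A₂₂` is maximal dissipative in `H⁻` (encoded by dissipativity
of `−A₂₂` together with a bounded everywhere-defined inverse `R l` of `A₂₂ − λ` for every
`λ` in the open upper half-plane) and `F(μ₀) = (A₂₂ − μ₀)⁻¹A₂₁` admits a bounded closure
`F₀`, then for every `λ ∈ ℂ⁺` the operator `F(λ) = (A₂₂ − λ)⁻¹A₂₁` admits a bounded
closure `Fλ` and `Fλ = F₀ + (λ − μ₀)(A₂₂ − λ)⁻¹F₀`. -/
theorem F_bounded_closure_of_bounded_closure_at_one_point
    {Hp Hm : Type*}
    [NormedAddCommGroup Hp] [InnerProductSpace ℂ Hp] [CompleteSpace Hp]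
    [TopologicalSpace.SeparableSpace Hp]
    [NormedAddCommGroup Hm] [InnerProductSpace ℂ Hm] [CompleteSpace Hm]
    [TopologicalSpace.SeparableSpace Hm]
    -- A₂₁ : D⁺ → H⁻ with D⁺ dense in H⁺
    (A21 : Hp →ₗ.[ℂ] Hm) (hA21dense : Dense (A21.domain : Set Hp))
    -- A₂₂ densely defined in H⁻, −A₂₂ dissipative
    (A22 : Hm →ₗ.[ℂ] Hm) (hA22dense : Dense (A22.domain : Set Hm))
    (hdiss : ∀ y : A22.domain, (inner ℂ (y : Hm) (A22 y) : ℂ).im ≤ 0)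
    -- −A₂₂ maximal dissipative: A₂₂ − λ is bijective with bounded inverse `R l`, λ ∈ ℂ⁺
    (R : ℂ → (Hm →L[ℂ] Hm))
    (hR : ∀ l : ℂ, 0 < l.im →
      (∀ y : A22.domain, R l (A22 y - l • (y : Hm)) = y) ∧
      (∀ z : Hm, ∃ y : A22.domain, A22 y - l • (y : Hm) = z))
    -- F(μ₀) admits a bounded closure F₀
    (μ₀ : ℂ) (hμ₀ : 0 < μ₀.im)
    (F₀ : Hp →L[ℂ] Hm)
    (hF₀ : ∀ (x : A21.domain) (y : A22.domain),
      A22 y - μ₀ • (y : Hm) = A21 x → F₀ x = y) :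
    ∀ l : ℂ, 0 < l.im →
      ∃ Fl : Hp →L[ℂ] Hm,
        (∀ (x : A21.domain) (y : A22.domain),
          A22 y - l • (y : Hm) = A21 x → Fl x = y) ∧
        Fl = F₀ + (l - μ₀) • (R l).comp F₀ := by
  intro l hl
  refine ⟨F₀ + (l - μ₀) • (R l).comp F₀, ?_, rfl⟩
  intro x y hxy
  obtain ⟨y₀, hy₀⟩ := (hR μ₀ hμ₀).2 (A21 x)
  have hF : F₀ x = y₀ := hF₀ x y₀ hy₀
  have hsub : A22 (y - y₀) - l • ((y - y₀ : A22.domain) : Hm)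
      = (l - μ₀) • (y₀ : Hm) := by
    have h1 : A22 (y - y₀) = A22 y - A22 y₀ := map_sub A22.toFun y y₀
    have h2 : ((y - y₀ : A22.domain) : Hm) = (y : Hm) - (y₀ : Hm) := rfl
    have h3 : A22 y - A22 y₀ = l • (y : Hm) - μ₀ • (y₀ : Hm) := by
      have := hxy.trans hy₀.symm
      linear_combination (norm := module) this
    rw [h1, h2, h3]
    module
  have hinv := (hR l hl).1 (y - y₀)
  rw [hsub, map_smul] at hinv
  have : ((y : Hm) - y₀) = (l - μ₀) • R l (y₀ : Hm) := by
    rw [hinv]; rfl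
  simp only [ContinuousLinearMap.add_apply, ContinuousLinearMap.smul_apply,
    ContinuousLinearMap.comp_apply, hF]
  rw [← this]
  abel
end

section
/- Suppose −A₂₂ is maximal dissipative in H⁻ (hence its adjoint A₂₂* is densely defined and A₂₂* − μ̄ : D(A₂₂*) → H⁻ is bijective with bounded inverse for μ ∈ ℂ⁺), and suppose A₂₁ is closable, so that its adjoint A₂₁* (an operator from H⁻ to H⁺) is densely defined, and D(A₂₁*) ⊇ D(A₂₂*). Then for every μ ∈ ℂ⁺ the operator A₂₁*(A₂₂* − μ̄)⁻¹ is defined on all of H⁻ and bounded, and the operator F(μ) = (A₂₂ − μ)⁻¹A₂₁, defined on D⁺, admits a bounded closure equal to the adjoint (A₂₁*(A₂₂* − μ̄)⁻¹)*. -/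
/-- If `−A₂₂` is maximal dissipative in `H⁻` (so that `A₂₂* − μ̄` is
bijective with bounded inverse for `μ ∈ ℂ⁺`), `A₂₁` is closable (so `A₂₁*` is densely
defined) and `D(A₂₁*) ⊇ D(A₂₂*)`, then `A₂₁*(A₂₂* − μ̄)⁻¹` is an everywhere defined
bounded operator `T` on `H⁻`, and `F(μ) = (A₂₂ − μ)⁻¹A₂₁` admits a bounded closure
equal to the adjoint `T*`. -/
theorem F_bounded_closure_of_adjoint_domains
    {Hp Hm : Type*}
    [NormedAddCommGroup Hp] [InnerProductSpace ℂ Hp] [CompleteSpace Hp]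
    [NormedAddCommGroup Hm] [InnerProductSpace ℂ Hm] [CompleteSpace Hm]
    -- A₂₁ : D⁺ → H⁻, densely defined and closable
    (A21 : Hp →ₗ.[ℂ] Hm) (hA21dense : Dense (A21.domain : Set Hp))
    (hA21closable : A21.IsClosable)
    (hA21adjdense : Dense (A21.adjoint.domain : Set Hm))
    -- A₂₂ densely defined in H⁻, −A₂₂ dissipative
    (A22 : Hm →ₗ.[ℂ] Hm) (hA22dense : Dense (A22.domain : Set Hm))
    (hdiss : ∀ y : A22.domain, (inner ℂ (y : Hm) (A22 y) : ℂ).im ≤ 0)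
    -- −A₂₂ maximal dissipative: A₂₂ − μ bijective with bounded inverse for μ ∈ ℂ⁺
    (hres : ∀ μ : ℂ, 0 < μ.im →
      (∀ y z : A22.domain, A22 y - μ • (y : Hm) = A22 z - μ • (z : Hm) → y = z) ∧
      (∀ z : Hm, ∃ y : A22.domain, A22 y - μ • (y : Hm) = z) ∧
      ∃ Rb : Hm →L[ℂ] Hm, ∀ y : A22.domain, Rb (A22 y - μ • (y : Hm)) = y)
    -- hence A₂₂* − μ̄ is bijective with bounded inverse for μ ∈ ℂ⁺
    (hresadj : ∀ μ : ℂ, 0 < μ.im →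
      (∀ y z : A22.adjoint.domain,
        A22.adjoint y - (starRingEnd ℂ) μ • (y : Hm) =
          A22.adjoint z - (starRingEnd ℂ) μ • (z : Hm) → y = z) ∧
      (∀ z : Hm, ∃ y : A22.adjoint.domain,
        A22.adjoint y - (starRingEnd ℂ) μ • (y : Hm) = z) ∧
      ∃ Rb : Hm →L[ℂ] Hm, ∀ y : A22.adjoint.domain,
        Rb (A22.adjoint y - (starRingEnd ℂ) μ • (y : Hm)) = y)
    -- D(A₂₁*) ⊇ D(A₂₂*)
    (hdom : A22.adjoint.domain ≤ A21.adjoint.domain) :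
    ∀ μ : ℂ, 0 < μ.im →
      ∃ T : Hm →L[ℂ] Hp,
        -- T is the everywhere defined bounded operator A₂₁*(A₂₂* − μ̄)⁻¹
        (∀ (z : Hm) (y : A22.adjoint.domain),
          A22.adjoint y - (starRingEnd ℂ) μ • (y : Hm) = z →
            T z = A21.adjoint ⟨(y : Hm), hdom y.2⟩) ∧
        -- F(μ) admits a bounded closure equal to the adjoint T*
        (∀ (x : A21.domain) (y : A22.domain),
          A22 y - μ • (y : Hm) = A21 x →
            (ContinuousLinearMap.adjoint T) x = y) := by
  intro μ hμ
  obtain ⟨hinj, hsurj, Rb, hRb⟩ := hresadj μ hμ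
  classical
  set ysel : Hm → A22.adjoint.domain := fun z => (hsurj z).choose with hyseldef
  have hysel : ∀ z, A22.adjoint (ysel z) - (starRingEnd ℂ) μ • ((ysel z : Hm)) = z :=
    fun z => (hsurj z).choose_spec
  have key : ∀ (z : Hm) (y : A22.adjoint.domain),
      A22.adjoint y - (starRingEnd ℂ) μ • (y : Hm) = z → ysel z = y := by
    intro z y hy
    exact hinj _ _ (by rw [hysel z, hy])
  have hRb' : ∀ z, ((ysel z : Hm)) = Rb z := by
    intro z
    conv_rhs => rw [← hysel z]
    rw [hRb]
  -- the underlying linear map of T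
  set incl : A22.adjoint.domain →ₗ[ℂ] A21.adjoint.domain := Submodule.inclusion hdom
    with hincl
  let Tlin : Hm →ₗ[ℂ] Hp :=
    { toFun := fun z => A21.adjoint (incl (ysel z))
      map_add' := by
        intro z1 z2
        have h12 : ysel (z1 + z2) = ysel z1 + ysel z2 := by
          apply key
          rw [A22.adjoint.map_add, Submodule.coe_add, smul_add]
          conv_rhs => rw [← hysel z1, ← hysel z2]
          abel
        rw [h12, map_add, A21.adjoint.map_add]
      map_smul' := by
        intro c z
        have hc : ysel (c • z) = c • ysel z := by
          apply key
          rw [A22.adjoint.map_smul, Submodule.coe_smul, smul_comm]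
          conv_rhs => rw [← hysel z]
          rw [smul_sub]
        rw [hc, map_smul, A21.adjoint.map_smul]
        rfl }
  have hTlin : ∀ z, Tlin z = A21.adjoint (incl (ysel z)) := fun _ => rfl
  have hFA : A21.adjoint.IsFormalAdjoint A21 :=
    LinearPMap.adjoint_isFormalAdjoint hA21dense
  -- continuity via the closed graph theorem
  have hcont : Continuous Tlin := by
    apply LinearMap.continuous_of_seq_closed_graph
    intro u x y hu hTu
    have hw : Filter.Tendsto (fun n => ((ysel (u n) : Hm))) Filter.atTop
        (nhds (ysel x : Hm)) := by
      simp only [hRb']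
      exact (Rb.continuous.tendsto x).comp hu
    have := LinearPMap.adjoint_apply_eq hA21dense (T := A21) (incl (ysel x))
      (x₀ := y) ?_
    · exact this.symm
    intro v
    have h1 : Filter.Tendsto (fun n => (inner ℂ (Tlin (u n)) (v : Hp) : ℂ))
        Filter.atTop (nhds (inner ℂ y (v : Hp))) :=
      ((hTu.comp Filter.tendsto_id).inner tendsto_const_nhds)
    have h2 : Filter.Tendsto (fun n => (inner ℂ (Tlin (u n)) (v : Hp) : ℂ))
        Filter.atTop (nhds (inner ℂ ((ysel x : Hm)) (A21 v))) := by
      have heq : ∀ n, (inner ℂ (Tlin (u n)) (v : Hp) : ℂ) =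
          inner ℂ ((ysel (u n) : Hm)) (A21 v) := by
        intro n
        rw [hTlin]
        exact hFA (incl (ysel (u n))) v
      simp only [heq]
      exact hw.inner tendsto_const_nhds
    have h3 := tendsto_nhds_unique h1 h2
    rw [h3]
    rfl
  refine ⟨⟨Tlin, hcont⟩, ?_, ?_⟩
  · intro z y hy
    have h1 : incl (ysel z) = ⟨(y : Hm), hdom y.2⟩ := by
      apply Subtype.ext
      simp [hincl, key z y hy]
    show Tlin z = _
    rw [hTlin, h1]
  · intro x y hy
    apply ext_inner_right ℂ
    intro z
    set w : A22.adjoint.domain := ysel z with hw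
    have hTz : (⟨Tlin, hcont⟩ : Hm →L[ℂ] Hp) z = A21.adjoint (incl w) := rfl
    rw [ContinuousLinearMap.adjoint_inner_left, hTz]
    have e1 : (inner ℂ (x : Hp) (A21.adjoint (incl w)) : ℂ) =
        inner ℂ (A21 x) ((w : Hm)) := by
      rw [← inner_conj_symm, hFA (incl w) x, inner_conj_symm]
      rfl
    have e2 : (inner ℂ (A21 x) ((w : Hm)) : ℂ) = inner ℂ (y : Hm) z := by
      rw [← hy]
      rw [inner_sub_left, inner_smul_left]
      have e3 : (inner ℂ (A22 y) ((w : Hm)) : ℂ) = inner ℂ (y : Hm) (A22.adjoint w) := by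
        rw [← inner_conj_symm, ← (LinearPMap.adjoint_isFormalAdjoint hA22dense) w y,
          inner_conj_symm]
      rw [e3]
      conv_rhs => rw [← hysel z]
      rw [inner_sub_right, inner_smul_right]
    rw [e1, e2]
end

section
/- Let A be a linear operator in H with dense domain D(A) = D⁺ ⊕ D⁻, and let μ ∈ ℂ be such that A₂₂ − μ : D⁻ → H⁻ is bijective with bounded inverse and the three operators G = A₁₂(A₂₂ − μ)⁻¹ (defined on H⁻), F = (A₂₂ − μ)⁻¹A₂₁ (defined on D⁺) and S = A₁₁ − A₁₂F (defined on D⁺) are bounded. Then A is closable, and, denoting again by F and S the bounded closures of F and S, the closure Ā of A is given by the factorization Ā = μ + [[1, G],[0, 1]] · [[S − μ, 0],[0, A₂₂ − μ]] · [[1, 0],[F, 1]] relative to H = H⁺ ⊕ H⁻; more precisely, D(Ā) = { x₊ + x₋ : x₊ ∈ H⁺, x₋ ∈ H⁻, Fx₊ + x₋ ∈ D⁻ } and Ā(x₊ + x₋) = [Sx₊ + G(A₂₂ − μ)(Fx₊ + x₋)] + [(A₂₂ − μ)(Fx₊ + x₋) + μx₋], where the first bracket lies in H⁺ and the second in H⁻.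 -/
/-- Lemma 2 of the paper. If `A₂₂ − μ : D⁻ → H⁻` is bijective with
bounded inverse and the operators `G = A₁₂(A₂₂ − μ)⁻¹`, `F = (A₂₂ − μ)⁻¹A₂₁` and
`S = A₁₁ − A₁₂F` are bounded (given by bounded operators `Gb`, `Fb`, `Sb` extending
them), then `A` is closable, the domain of the closure `Ā` is
`{ x₊ + x₋ : x₊ ∈ H⁺, x₋ ∈ H⁻, Fx₊ + x₋ ∈ D⁻ }` and
`Ā(x₊ + x₋) = [Sx₊ + G(A₂₂ − μ)(Fx₊ + x₋)] + [(A₂₂ − μ)(Fx₊ + x₋) + μx₋]`.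
Membership `x ∈ H^±` is encoded as `P± x = x` and `D^± = D(A) ∩ H^±`. -/
theorem closure_of_operator_matrix
    {H : Type*} [NormedAddCommGroup H] [InnerProductSpace ℂ H] [CompleteSpace H]
    (Pp Pm : H →L[ℂ] H)
    (hPp : IsSelfAdjoint Pp) (hPm : IsSelfAdjoint Pm)
    (hPpPm : Pp.comp Pm = 0) (hPmPp : Pm.comp Pp = 0)
    (hsum : Pp + Pm = ContinuousLinearMap.id ℂ H)
    -- A with dense domain D(A) = D⁺ ⊕ D⁻
    (A : H →ₗ.[ℂ] H)
    (hdense : Dense (A.domain : Set H))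
    (hsplit : ∀ x ∈ A.domain, Pp x ∈ A.domain)
    (μ : ℂ)
    -- A₂₂ − μ : D⁻ → H⁻ is bijective with bounded inverse Rres
    (Rres : H →L[ℂ] H)
    (hRl : ∀ y : A.domain, Pm (y : H) = y → Rres (Pm (A y) - μ • (y : H)) = y)
    (hRs : ∀ z : H, Pm z = z →
      ∃ y : A.domain, Pm (y : H) = y ∧ Pm (A y) - μ • (y : H) = z)
    -- G = A₁₂(A₂₂ − μ)⁻¹ is bounded
    (Gb : H →L[ℂ] H)
    (hGb : ∀ y : A.domain, Pm (y : H) = y → Gb (Pm (A y) - μ • (y : H)) = Pp (A y))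
    -- F = (A₂₂ − μ)⁻¹A₂₁ is bounded
    (Fb : H →L[ℂ] H)
    (hFb : ∀ (x y : A.domain), Pp (x : H) = x → Pm (y : H) = y →
      Pm (A y) - μ • (y : H) = Pm (A x) → Fb x = y)
    -- S = A₁₁ − A₁₂F is bounded
    (Sb : H →L[ℂ] H)
    (hSb : ∀ (x y : A.domain), Pp (x : H) = x → Pm (y : H) = y →
      Pm (A y) - μ • (y : H) = Pm (A x) → Sb x = Pp (A x) - Pp (A y)) :
    A.IsClosable ∧
    -- description of the domain of the closure
    (∀ x : H, x ∈ A.closure.domain ↔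
      (Fb (Pp x) + Pm x ∈ A.domain ∧ Pm (Fb (Pp x) + Pm x) = Fb (Pp x) + Pm x)) ∧
    -- description of the action of the closure
    (∀ (x : A.closure.domain) (w : A.domain), (w : H) = Fb (Pp (x : H)) + Pm (x : H) →
      A.closure x =
        (Sb (Pp (x : H)) + Gb (Pm (A w) - μ • (w : H))) +
          ((Pm (A w) - μ • (w : H)) + μ • Pm (x : H))) := by
  classical
  -- pointwise projection identities
  have hid : ∀ x : H, Pp x + Pm x = x := fun x => by
    have := congrArg (fun f : H →L[ℂ] H => f x) hsum
    simpa using this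
  have hmp : ∀ x : H, Pm (Pp x) = 0 := fun x => by
    have := congrArg (fun f : H →L[ℂ] H => f x) hPmPp
    simpa using this
  have hpm : ∀ x : H, Pp (Pm x) = 0 := fun x => by
    have := congrArg (fun f : H →L[ℂ] H => f x) hPpPm
    simpa using this
  have hmm : ∀ x : H, Pm (Pm x) = Pm x := fun x => by
    have h := congrArg Pm (hid x)
    rw [map_add, hmp] at h; simpa using h
  have hpp : ∀ x : H, Pp (Pp x) = Pp x := fun x => by
    have h := congrArg Pp (hid x)
    rw [map_add, hpm] at h; simpa using h
  have hsplitm : ∀ x ∈ A.domain, Pm x ∈ A.domain := fun x hx => by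
    have hxx : Pm x = x - Pp x := by rw [eq_sub_iff_add_eq, add_comm, hid]
    rw [hxx]; exact A.domain.sub_mem hx (hsplit x hx)
  -- key auxiliary producer
  have hY : ∀ u : A.domain, Pp (u : H) = u → ∃ y : A.domain, Pm (y : H) = y ∧
      Pm (A y) - μ • (y : H) = Pm (A u) ∧ Fb (u : H) = y ∧
      Sb (u : H) = Pp (A u) - Pp (A y) := by
    intro u hu
    obtain ⟨y, hy1, hy2⟩ := hRs (Pm (A u)) (hmm _)
    exact ⟨y, hy1, hy2, hFb u y hu hy1 hy2, hSb u y hu hy1 hy2⟩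
  -- density fact : Pm ∘ Sb ∘ Pp = 0
  have hPmSb : ∀ x : H, Pm (Sb (Pp x)) = 0 := by
    have heq : Set.EqOn (fun x => Pm (Sb (Pp x))) (fun _ => (0 : H))
        (A.domain : Set H) := by
      intro d hd
      have hu : Pp d ∈ A.domain := hsplit d hd
      obtain ⟨y, hy1, hy2, hy3, hy4⟩ := hY ⟨Pp d, hu⟩ (hpp d)
      simp only
      rw [show Sb (Pp d) = _ from hy4, map_sub, hmp, hmp, sub_zero]
    have hcl := heq.closure
      (Pm.continuous.comp (Sb.continuous.comp Pp.continuous)) continuous_const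
    intro x
    have hx : x ∈ closure (A.domain : Set H) := by rw [hdense.closure_eq]; trivial
    exact hcl hx
  -- the candidate closed graph
  set fst := ContinuousLinearMap.fst ℂ H H with hfst
  set snd := ContinuousLinearMap.snd ℂ H H with hsnd
  set Zc : (H × H) →L[ℂ] H := Pm.comp snd - μ • Pm.comp fst with hZcdef
  set L1 : (H × H) →L[ℂ] H :=
    Rres.comp Zc - (Fb.comp (Pp.comp fst) + Pm.comp fst) with hL1def
  set L2 : (H × H) →L[ℂ] H :=
    snd - (Sb.comp (Pp.comp fst) + Gb.comp Zc + (Zc + μ • Pm.comp fst)) with hL2def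
  set G₀ : Submodule ℂ (H × H) := LinearMap.ker (L1 : (H × H) →ₗ[ℂ] H) ⊓ LinearMap.ker (L2 : (H × H) →ₗ[ℂ] H) with hG₀def
  have hmemG : ∀ p : H × H, p ∈ G₀ ↔
      (Rres (Pm p.2 - μ • Pm p.1) = Fb (Pp p.1) + Pm p.1 ∧
       p.2 = Sb (Pp p.1) + Gb (Pm p.2 - μ • Pm p.1) +
         ((Pm p.2 - μ • Pm p.1) + μ • Pm p.1)) := by
    intro p
    rw [hG₀def, Submodule.mem_inf, LinearMap.mem_ker, LinearMap.mem_ker]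
    simp only [hL1def, hL2def, hZcdef, hfst, hsnd, ContinuousLinearMap.coe_coe, ContinuousLinearMap.coe_sub',
      ContinuousLinearMap.add_apply, ContinuousLinearMap.coe_comp',
      ContinuousLinearMap.smul_apply, ContinuousLinearMap.coe_fst',
      ContinuousLinearMap.coe_snd', Pi.sub_apply, Function.comp_apply,
      ContinuousLinearMap.sub_apply, sub_eq_zero]
  have hG₀closed : IsClosed (G₀ : Set (H × H)) := by
    rw [hG₀def, Submodule.coe_inf]
    exact (ContinuousLinearMap.isClosed_ker L1).inter
      (ContinuousLinearMap.isClosed_ker L2)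
  have hG₀graph : ∀ p : H × H, p ∈ G₀ → p.1 = 0 → p.2 = 0 := by
    intro p hp hp1
    rw [hmemG] at hp
    obtain ⟨h1, h2⟩ := hp
    rw [hp1] at h1 h2
    simp only [map_zero, smul_zero, sub_zero, add_zero] at h1 h2
    obtain ⟨v, hv1, hv2⟩ := hRs (Pm p.2) (hmm _)
    have hvz : v = 0 := by
      apply Subtype.ext
      have := hRl v hv1
      rw [hv2] at this
      rw [← this, h1]; rfl
    have hz : Pm p.2 = 0 := by
      rw [← hv2, hvz]; simp
    rw [hz] at h2
    simpa using h2
  -- membership of the graph of A in G₀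
  have hAG : A.graph ≤ G₀ := by
    intro p hp
    rw [LinearPMap.mem_graph_iff] at hp
    obtain ⟨d, hd1, hd2⟩ := hp
    rw [hmemG, ← hd1, ← hd2]
    have hud : Pp (d : H) ∈ A.domain := hsplit _ d.2
    have hmd : Pm (d : H) ∈ A.domain := hsplitm _ d.2
    set u : A.domain := ⟨Pp (d : H), hud⟩ with hu
    set m : A.domain := ⟨Pm (d : H), hmd⟩ with hm
    have hdum : d = u + m := Subtype.ext (by
      show (d : H) = Pp (d : H) + Pm (d : H); rw [hid])
    obtain ⟨y, hy1, hy2, hy3, hy4⟩ := hY u (hpp _)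
    have hAd : A d = A u + A m := by rw [hdum, A.map_add]
    have hwm : Pm ((y + m : A.domain) : H) = ((y + m : A.domain) : H) := by
      push_cast
      rw [map_add, hy1]
      show (y : H) + Pm (Pm (d : H)) = _
      rw [hmm]
    have hAw : A (y + m) = A y + A m := A.map_add y m
    have hζ : Pm (A d) - μ • Pm (d : H)
        = Pm (A (y + m)) - μ • ((y + m : A.domain) : H) := by
      rw [hAd, hAw]
      push_cast
      simp only [map_add, smul_add]
      rw [← hy2]
      show Pm (A y) - μ • (y : H) + Pm (A m) - μ • Pm (d : H) =
        Pm (A y) + Pm (A m) - (μ • (y : H) + μ • Pm (d : H))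
      abel
    constructor
    · rw [hζ, hRl _ hwm]
      push_cast
      rw [hy3]
    · have hGζ : Gb (Pm (A d) - μ • Pm (d : H)) = Pp (A y) + Pp (A m) := by
        rw [hζ, hGb _ hwm, hAw, map_add]
      have hSbu : Sb (Pp (d : H)) = Pp (A u) - Pp (A y) := hy4
      rw [hGζ, hSbu, hAd]
      simp only [map_add]
      conv_lhs => rw [← hid ((A u + A m : H))]
      simp only [map_add]
      abel
  -- G₀ is contained in the closure of the graph of A
  have hGA : (G₀ : Set (H × H)) ⊆ closure (A.graph : Set (H × H)) := by
    intro p hp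
    rw [SetLike.mem_coe, hmemG] at hp
    obtain ⟨h1, h2⟩ := hp
    set ζ := Pm p.2 - μ • Pm p.1 with hζdef
    have hζm : Pm ζ = ζ := by
      rw [hζdef, map_sub, hmm, map_smul, hmm]
    obtain ⟨v, hv1, hv2⟩ := hRs ζ hζm
    have hvval : (v : H) = Fb (Pp p.1) + Pm p.1 := by
      rw [← h1, ← hv2, hRl v hv1]
    obtain ⟨dseq, hdmem, hdlim⟩ := mem_closure_iff_seq_limit.mp
      (by rw [hdense.closure_eq]; trivial : p.1 ∈ closure (A.domain : Set H))
    set u : ℕ → A.domain := fun n => ⟨Pp (dseq n), hsplit _ (hdmem n)⟩ with hudef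
    choose y hy1 hy2 hy3 hy4 using fun n => hY (u n) (hpp _)
    set xs : ℕ → A.domain := fun n => u n + v - y n with hxsdef
    -- value of A on xs n
    have hAv : A v = Gb ζ + (ζ + μ • (v : H)) := by
      have hGv : Gb ζ = Pp (A v) := by rw [← hv2]; exact hGb v hv1
      have hPmv : Pm (A v) = ζ + μ • (v : H) := by
        rw [← hv2]; abel
      rw [hGv, ← hPmv, hid]
    have hAx : ∀ n, A (xs n) =
        Sb (Pp (dseq n)) - μ • (y n : H) + (Gb ζ + (ζ + μ • (v : H))) := by
      intro n
      have h0 : A (xs n) = A (u n) + A v - A (y n) := by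
        rw [hxsdef]
        simp only
        rw [A.map_sub, A.map_add]
      have e1 : A (u n) - A (y n) = Sb (Pp (dseq n)) - μ • (y n : H) := by
        have h4 : Sb (Pp (dseq n)) = Pp (A (u n)) - Pp (A (y n)) := hy4 n
        have h2' : Pm (A (u n)) - Pm (A (y n)) = -(μ • (y n : H)) := by
          rw [← hy2 n]; abel
        calc A (u n) - A (y n)
            = (Pp (A (u n)) + Pm (A (u n))) - (Pp (A (y n)) + Pm (A (y n))) := by
              rw [hid, hid]
          _ = (Pp (A (u n)) - Pp (A (y n))) + (Pm (A (u n)) - Pm (A (y n))) := by abel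
          _ = Sb (Pp (dseq n)) - μ • (y n : H) := by rw [← h4, h2']; abel
      rw [h0, hAv, ← e1]
      abel
    -- limits
    have hdl : Filter.Tendsto (fun n => Pp (dseq n)) Filter.atTop (nhds (Pp p.1)) :=
      (Pp.continuous.tendsto _).comp hdlim
    have hyl : Filter.Tendsto (fun n => (y n : H)) Filter.atTop
        (nhds (Fb (Pp p.1))) := by
      have hfun : (fun n => (y n : H)) = fun n => Fb (Pp (dseq n)) := by
        funext n
        exact (hy3 n).symm
      rw [hfun]
      exact (Fb.continuous.tendsto _).comp hdl
    have hxl : Filter.Tendsto (fun n => ((xs n : A.domain) : H)) Filter.atTop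
        (nhds p.1) := by
      have hfun : (fun n => ((xs n : A.domain) : H))
          = fun n => Pp (dseq n) + (v : H) - (y n : H) := rfl
      rw [hfun]
      have : Filter.Tendsto (fun n => Pp (dseq n) + (v : H) - (y n : H))
          Filter.atTop (nhds (Pp p.1 + (v : H) - Fb (Pp p.1))) :=
        (hdl.add_const _).sub hyl
      convert this using 2
      rw [hvval]
      have : Pp p.1 + (Fb (Pp p.1) + Pm p.1) - Fb (Pp p.1) = Pp p.1 + Pm p.1 := by abel
      rw [this, hid]
    have hAxl : Filter.Tendsto (fun n => A (xs n)) Filter.atTop (nhds p.2) := by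
      have hfun : (fun n => A (xs n)) = fun n =>
          Sb (Pp (dseq n)) - μ • (y n : H) + (Gb ζ + (ζ + μ • (v : H))) := by
        funext n; exact hAx n
      rw [hfun]
      have hlim : Filter.Tendsto (fun n =>
          Sb (Pp (dseq n)) - μ • (y n : H) + (Gb ζ + (ζ + μ • (v : H))))
          Filter.atTop (nhds (Sb (Pp p.1) - μ • Fb (Pp p.1)
            + (Gb ζ + (ζ + μ • (v : H))))) := by
        exact (((Sb.continuous.tendsto _).comp hdl).sub
          (hyl.const_smul μ)).add_const _
      convert hlim using 2
      rw [h2, hvval]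
      simp only [smul_add]
      abel
    apply mem_closure_of_tendsto (hxl.prodMk_nhds hAxl)
    exact Filter.Eventually.of_forall fun n => A.mem_graph (xs n)
  -- the closure of the graph equals G₀
  have hclosure : A.graph.topologicalClosure = G₀ := by
    apply le_antisymm (Submodule.topologicalClosure_minimal _ hAG hG₀closed)
    intro p hp
    rw [← SetLike.mem_coe, Submodule.topologicalClosure_coe]
    exact hGA hp
  have hclosable : A.IsClosable := by
    refine ⟨G₀.toLinearPMap, ?_⟩
    rw [hclosure, Submodule.toLinearPMap_graph_eq _ hG₀graph]
  have hCG : A.closure.graph = G₀ :=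
    hclosable.graph_closure_eq_closure_graph.symm.trans hclosure
  -- generic membership lemma for the action
  have hZmem : ∀ (x : H) (w : A.domain), (w : H) = Fb (Pp x) + Pm x →
      Pm (w : H) = w →
      (x, Sb (Pp x) + Gb (Pm (A w) - μ • (w : H)) +
        ((Pm (A w) - μ • (w : H)) + μ • Pm x)) ∈ G₀ := by
    intro x w hw hw2
    rw [hmemG]
    set η := Pm (A w) - μ • (w : H) with hηdef
    have hηm : Pm η = η := by
      rw [hηdef, map_sub, hmm, map_smul, hw2]
    have hGη : Gb η = Pp (A w) := hGb w hw2
    have hPmz : Pm (Sb (Pp x) + Gb η + (η + μ • Pm x)) = η + μ • Pm x := by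
      simp only [map_add, map_smul, hPmSb x, hGη, hmp, hηm, hmm]
      abel
    have hζeq : Pm (Sb (Pp x) + Gb η + (η + μ • Pm x)) - μ • Pm x = η := by
      rw [hPmz]; abel
    constructor
    · show Rres (Pm _ - μ • Pm x) = _
      rw [hζeq, hηdef, hRl w hw2, hw]
    · show _ = Sb (Pp x) + Gb (Pm _ - μ • Pm x) + ((Pm _ - μ • Pm x) + μ • Pm x)
      rw [hζeq]
  -- forward direction helper
  have hfwd : ∀ p : H × H, p ∈ G₀ →
      (Fb (Pp p.1) + Pm p.1 ∈ A.domain ∧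
        Pm (Fb (Pp p.1) + Pm p.1) = Fb (Pp p.1) + Pm p.1) := by
    intro p hp
    rw [hmemG] at hp
    obtain ⟨h1, h2⟩ := hp
    set ζ := Pm p.2 - μ • Pm p.1 with hζdef
    have hζm : Pm ζ = ζ := by rw [hζdef, map_sub, hmm, map_smul, hmm]
    obtain ⟨v, hv1, hv2⟩ := hRs ζ hζm
    have hvval : Fb (Pp p.1) + Pm p.1 = (v : H) := by
      rw [← h1, ← hv2, hRl v hv1]
    rw [hvval]
    exact ⟨v.2, hv1⟩
  refine ⟨hclosable, fun x => ?_, fun x w hw => ?_⟩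
  · constructor
    · intro hx
      rw [LinearPMap.mem_domain_iff] at hx
      obtain ⟨z, hz⟩ := hx
      rw [hCG] at hz
      exact hfwd (x, z) hz
    · rintro ⟨hw1, hw2⟩
      rw [LinearPMap.mem_domain_iff]
      refine ⟨Sb (Pp x) + Gb (Pm (A ⟨Fb (Pp x) + Pm x, hw1⟩) - μ • (Fb (Pp x) + Pm x)) +
        ((Pm (A ⟨Fb (Pp x) + Pm x, hw1⟩) - μ • (Fb (Pp x) + Pm x)) + μ • Pm x), ?_⟩
      rw [hCG]
      exact hZmem x ⟨Fb (Pp x) + Pm x, hw1⟩ rfl hw2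
  · have h1 : (((x : H), A.closure x)) ∈ G₀ := by
      rw [← hCG]; exact A.closure.mem_graph x
    have hw2 : Pm (w : H) = w := by
      have := (hfwd _ h1).2
      simp only at this
      rw [hw]; exact this
    have h2 := hZmem (x : H) w hw hw2
    have hdiff := G₀.sub_mem h1 h2
    have hz := hG₀graph _ hdiff (by simp)
    simp only [Prod.snd_sub, sub_eq_zero] at hz
    rw [hz]
end

section
/- Let A be a linear operator in H with dense domain D(A) = D⁺ ⊕ D⁻, let μ ∈ ℂ be such that A₂₂ − μ : D⁻ → H⁻ is bijective with bounded inverse, and suppose the operators G = A₁₂(A₂₂ − μ)⁻¹, F = (A₂₂ − μ)⁻¹A₂₁ and S = A₁₁ − A₁₂F are bounded (F and S on the dense domain D⁺), so that A has a closure Ā. Let K : H⁺ → H⁻ be a bounded operator and L(K) = { x₊ + Kx₊ : x₊ ∈ H⁺ } the graph subspace with angle operator K. Then L(K) ⊆ D(Ā) if and only if the operator L = A₂₁ + (A₂₂ − μ)K is well defined on D⁺ (i.e. Kx₊ ∈ D⁻ for all x₊ ∈ D⁺) and admits a bounded closure L̄ : H⁺ → H⁻. -/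
/-- first part of Lemma 4 of the paper. Under the assumptions of
Lemma 2 (so that `A` has a closure `Ā`), the graph subspace
`L(K) = { x₊ + K x₊ : x₊ ∈ H⁺ }` of a bounded angle operator `K : H⁺ → H⁻` is
contained in `D(Ā)` iff `L = A₂₁ + (A₂₂ − μ)K` is well defined on `D⁺`
(i.e. `K x₊ ∈ D⁻` for `x₊ ∈ D⁺`) and admits a bounded closure. -/
theorem graph_subspace_subset_domain_closure_iff
    {H : Type*} [NormedAddCommGroup H] [InnerProductSpace ℂ H] [CompleteSpace H]
    (Pp Pm : H →L[ℂ] H)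
    (hPp : IsSelfAdjoint Pp) (hPm : IsSelfAdjoint Pm)
    (hPpPm : Pp.comp Pm = 0) (hPmPp : Pm.comp Pp = 0)
    (hsum : Pp + Pm = ContinuousLinearMap.id ℂ H)
    -- A with dense domain D(A) = D⁺ ⊕ D⁻
    (A : H →ₗ.[ℂ] H)
    (hdense : Dense (A.domain : Set H))
    (hsplit : ∀ x ∈ A.domain, Pp x ∈ A.domain)
    (μ : ℂ)
    -- A₂₂ − μ : D⁻ → H⁻ is bijective with bounded inverse Rres
    (Rres : H →L[ℂ] H)
    (hRl : ∀ y : A.domain, Pm (y : H) = y → Rres (Pm (A y) - μ • (y : H)) = y)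
    (hRs : ∀ z : H, Pm z = z →
      ∃ y : A.domain, Pm (y : H) = y ∧ Pm (A y) - μ • (y : H) = z)
    -- G = A₁₂(A₂₂ − μ)⁻¹ is bounded
    (Gb : H →L[ℂ] H)
    (hGb : ∀ y : A.domain, Pm (y : H) = y → Gb (Pm (A y) - μ • (y : H)) = Pp (A y))
    -- F = (A₂₂ − μ)⁻¹A₂₁ is bounded
    (Fb : H →L[ℂ] H)
    (hFb : ∀ (x y : A.domain), Pp (x : H) = x → Pm (y : H) = y →
      Pm (A y) - μ • (y : H) = Pm (A x) → Fb x = y)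
    -- S = A₁₁ − A₁₂F is bounded
    (Sb : H →L[ℂ] H)
    (hSb : ∀ (x y : A.domain), Pp (x : H) = x → Pm (y : H) = y →
      Pm (A y) - μ • (y : H) = Pm (A x) → Sb x = Pp (A x) - Pp (A y))
    -- the angle operator K : H⁺ → H⁻
    (K : H →L[ℂ] H) (hKp : K.comp Pp = K) (hKm : Pm.comp K = K) :
    -- L(K) ⊆ D(Ā) ↔ (K maps D⁺ into D⁻ and A₂₁ + (A₂₂ − μ)K has a bounded closure)
    (∀ x : H, Pp x = x → x + K x ∈ A.closure.domain) ↔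
      ((∀ x : A.domain, Pp (x : H) = x → K x ∈ A.domain) ∧
        ∃ Lb : H →L[ℂ] H, ∀ (x w : A.domain), Pp (x : H) = x → (w : H) = K x →
          Lb x = Pm (A x) + (Pm (A w) - μ • (w : H))) := by
  -- pointwise projection identities
  have hsum' : ∀ z : H, Pp z + Pm z = z := by
    intro z
    have := congrArg (fun T : H →L[ℂ] H => T z) hsum
    simpa using this
  have hPmPp' : ∀ z : H, Pm (Pp z) = 0 := by
    intro z
    have := congrArg (fun T : H →L[ℂ] H => T z) hPmPp
    simpa using this
  have hPpPm' : ∀ z : H, Pp (Pm z) = 0 := by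
    intro z
    have := congrArg (fun T : H →L[ℂ] H => T z) hPpPm
    simpa using this
  have hPpPp : ∀ z : H, Pp (Pp z) = Pp z := by
    intro z
    have h := hsum' (Pp z)
    rw [hPmPp' z, add_zero] at h
    exact h
  have hPmPm : ∀ z : H, Pm (Pm z) = Pm z := by
    intro z
    have h := hsum' (Pm z)
    rw [hPpPm' z, zero_add] at h
    exact h
  have hKm' : ∀ z : H, Pm (K z) = K z := by
    intro z
    have := congrArg (fun T : H →L[ℂ] H => T z) hKm
    simpa using this
  have hPpK : ∀ z : H, Pp (K z) = 0 := by
    intro z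
    rw [← hKm' z]
    exact hPpPm' _
  -- the auxiliary element y' = F x ∈ D⁻ with (A₂₂ - μ) y' = A₂₁ x
  have aux : ∀ x : A.domain, Pp (x : H) = x →
      ∃ y' : A.domain, Pm (y' : H) = y' ∧ Pm (A y') - μ • (y' : H) = Pm (A x) ∧
        Fb x = y' ∧ Rres (Pm (A x)) = y' ∧ Sb x = Pp (A x) - Pp (A y') := by
    intro x hx
    obtain ⟨y', hy'm, hy'e⟩ := hRs (Pm (A x)) (hPmPm _)
    refine ⟨y', hy'm, hy'e, hFb x y' hx hy'm hy'e, ?_, hSb x y' hx hy'm hy'e⟩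
    rw [← hy'e]; exact hRl y' hy'm
  -- injectivity of Rres on H⁻
  have hRinj : ∀ v v' : H, Pm v = v → Pm v' = v' → Rres v = Rres v' → v = v' := by
    intro v v' hv hv' he
    obtain ⟨y, hym, hye⟩ := hRs v hv
    obtain ⟨y', hy'm, hy'e⟩ := hRs v' hv'
    have h1 : Rres v = (y : H) := by rw [← hye]; exact hRl y hym
    have h2 : Rres v' = (y' : H) := by rw [← hy'e]; exact hRl y' hy'm
    have : y = y' := Subtype.ext (by rw [← h1, ← h2, he])
    rw [← hye, ← hy'e, this]
  -- Rres v lies in the domain for v ∈ H⁻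
  have hRmem : ∀ v : H, Pm v = v → Rres v ∈ A.domain := by
    intro v hv
    obtain ⟨y, hym, hye⟩ := hRs v hv
    have h1 : Rres v = (y : H) := by rw [← hye]; exact hRl y hym
    rw [h1]; exact y.2
  -- the key closed set containing the graph of A
  set C : Set (H × H) := {p : H × H |
      Pm p.1 = Rres (Pm p.2 - μ • Pm p.1) - Fb (Pp p.1) ∧
      Pp p.2 = Sb (Pp p.1) + Gb (Pm p.2 - μ • Pm p.1)} with hC
  have hCclosed : IsClosed C := by
    apply IsClosed.inter
    · exact isClosed_eq (by fun_prop) (by fun_prop)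
    · exact isClosed_eq (by fun_prop) (by fun_prop)
  -- the graph of A is contained in C
  have core : ∀ u : A.domain, ((u : H), A u) ∈ C := by
    intro u
    set x : A.domain := ⟨Pp (u : H), hsplit _ u.2⟩ with hxdef
    have hxcoe : (x : H) = Pp (u : H) := rfl
    have hx : Pp (x : H) = x := by rw [hxcoe, hPpPp]
    set y : A.domain := u - x with hydef
    have hycoe : (y : H) = Pm (u : H) := by
      show (u : H) - Pp (u : H) = Pm (u : H)
      rw [eq_comm, eq_sub_iff_add_eq, add_comm]
      exact hsum' (u : H)
    have hy : Pm (y : H) = y := by rw [hycoe, hPmPm]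
    have huxy : u = x + y := by
      apply Subtype.ext
      show (u : H) = (x : H) + ((u : H) - (x : H))
      abel
    have hAu : A u = A x + A y := by rw [huxy, A.map_add]
    obtain ⟨y', hy'm, hy'e, hF, hR, hS⟩ := aux x hx
    -- the element v
    have hv : Pm (A u) - μ • Pm (u : H) =
        Pm (A x) + (Pm (A y) - μ • (y : H)) := by
      rw [hAu, map_add, ← hycoe]; abel
    constructor
    · show Pm (u : H) = Rres (Pm (A u) - μ • Pm (u : H)) - Fb (Pp (u : H))
      rw [hv, map_add, hRl y hy, hR, ← hxcoe, hF, ← hycoe]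
      abel
    · show Pp (A u) = Sb (Pp (u : H)) + Gb (Pm (A u) - μ • Pm (u : H))
      have hyy'm : Pm ((y + y' : A.domain) : H) = ((y + y' : A.domain) : H) := by
        push_cast
        rw [map_add, hy, hy'm]
      have hvyy' : Pm (A (y + y')) - μ • ((y + y' : A.domain) : H) =
          Pm (A u) - μ • Pm (u : H) := by
        rw [A.map_add, map_add, hv]
        push_cast
        rw [smul_add]
        rw [← hy'e]
        abel
      have hG : Gb (Pm (A u) - μ • Pm (u : H)) = Pp (A (y + y')) := by
        rw [← hvyy']
        exact hGb (y + y') hyy'm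
      rw [hG, ← hxcoe, hS, hAu, A.map_add, map_add, map_add]
      abel
  have hgraphC : (A.graph : Set (H × H)) ⊆ C := by
    rintro ⟨a, b⟩ hab
    rw [SetLike.mem_coe, LinearPMap.mem_graph_iff] at hab
    obtain ⟨u, h1, h2⟩ := hab
    simp only [Prod.fst, Prod.snd] at h1 h2
    rw [← h1, ← h2]
    exact core u
  have hclC : (closure (A.graph : Set (H × H))) ⊆ C :=
    closure_minimal hgraphC hCclosed
  -- elements of the topological closure with zero first component vanish
  have hzero : ∀ (p : H × H), p ∈ A.graph.topologicalClosure → p.1 = 0 → p.2 = 0 := by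
    intro p hp hp1
    have hpC : p ∈ C := by
      apply hclC
      rw [← Submodule.topologicalClosure_coe]
      exact hp
    obtain ⟨hc1, hc2⟩ := hpC
    rw [hp1] at hc1 hc2
    simp only [map_zero, smul_zero, sub_zero] at hc1 hc2
    have hR0 : Rres (Pm p.2) = 0 := by rw [← hc1]
    have hPm0 : Pm p.2 = 0 := by
      have := hRinj (Pm p.2) 0 (hPmPm _) (map_zero Pm) (by rw [hR0, map_zero])
      exact this
    have hPp0 : Pp p.2 = 0 := by
      rw [hc2, hPm0]; simp
    rw [← hsum' p.2, hPp0, hPm0, add_zero]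
  have hclosable : A.IsClosable :=
    ⟨A.graph.topologicalClosure.toLinearPMap,
      (Submodule.toLinearPMap_graph_eq _ hzero).symm⟩
  have hgraphEq : A.graph.topologicalClosure = A.closure.graph :=
    hclosable.graph_closure_eq_closure_graph
  have hclosureC : ∀ p : H × H, p ∈ A.closure.graph → p ∈ C := by
    intro p hp
    apply hclC
    rw [← Submodule.topologicalClosure_coe, hgraphEq]
    exact hp
  constructor
  · -- forward direction
    intro h
    have hmain : ∀ x : H, Pp x = x → ∃ v : H, Pm v = v ∧ Rres v = K x + Fb x := by
      intro x hx
      have hu := h x hx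
      have hmem : ((x + K x : H), A.closure ⟨x + K x, hu⟩) ∈ A.closure.graph :=
        A.closure.mem_graph ⟨x + K x, hu⟩
      obtain ⟨hc1, hc2⟩ := hclosureC _ hmem
      have hPmx : Pm x = 0 := by rw [← hx, hPmPp']
      have hPpu : Pp (x + K x) = x := by rw [map_add, hx, hPpK, add_zero]
      have hPmu : Pm (x + K x) = K x := by rw [map_add, hPmx, hKm', zero_add]
      simp only [hPpu, hPmu] at hc1
      refine ⟨Pm (A.closure ⟨x + K x, hu⟩) - μ • K x, ?_, ?_⟩
      · rw [map_sub, hPmPm, map_smul, hKm']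
      · exact sub_eq_iff_eq_add.mp hc1.symm
    constructor
    · -- K maps D⁺ into D⁻
      intro x hx
      obtain ⟨v, hvm, hve⟩ := hmain (x : H) hx
      obtain ⟨y', hy'm, hy'e, hF, hR, hS⟩ := aux x hx
      have hKx : K (x : H) = Rres v - Fb (x : H) := by rw [hve]; abel
      rw [hKx, hF]
      exact sub_mem (hRmem v hvm) y'.2
    · -- construction of Lb via the closed graph theorem
      have hex : ∀ x : H, ∃ v : H, Pm v = v ∧ Rres v = K (Pp x) + Fb (Pp x) :=
        fun x => hmain (Pp x) (hPpPp x)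
      have huniq : ∀ (x v : H), Pm v = v → Rres v = K (Pp x) + Fb (Pp x) →
          (hex x).choose = v := by
        intro x v hv he
        obtain ⟨h1, h2⟩ := (hex x).choose_spec
        exact hRinj _ _ h1 hv (by rw [h2, he])
      set f : H →ₗ[ℂ] H :=
        { toFun := fun x => (hex x).choose
          map_add' := by
            intro a b
            obtain ⟨ha1, ha2⟩ := (hex a).choose_spec
            obtain ⟨hb1, hb2⟩ := (hex b).choose_spec
            refine huniq (a + b) _ ?_ ?_
            · rw [map_add, ha1, hb1]
            · rw [map_add, ha2, hb2, map_add, map_add, map_add]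
              abel
          map_smul' := by
            intro c a
            obtain ⟨ha1, ha2⟩ := (hex a).choose_spec
            refine huniq (c • a) _ ?_ ?_
            · simp only [map_smul, ha1]
            · simp only [map_smul, ha2, RingHom.id_apply, smul_add] } with hf
      have hfgraph : IsClosed (f.graph : Set (H × H)) := by
        have hgr : (f.graph : Set (H × H)) =
            {p : H × H | Pm p.2 = p.2 ∧ Rres p.2 = K (Pp p.1) + Fb (Pp p.1)} := by
          ext p
          simp only [SetLike.mem_coe, LinearMap.mem_graph_iff, Set.mem_setOf_eq]
          constructor
          · intro hp
            rw [hp]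
            exact (hex p.1).choose_spec
          · rintro ⟨h1, h2⟩
            exact (huniq p.1 p.2 h1 h2).symm
        rw [hgr]
        exact IsClosed.inter (isClosed_eq (by fun_prop) (by fun_prop))
          (isClosed_eq (by fun_prop) (by fun_prop))
      refine ⟨⟨f, f.continuous_of_isClosed_graph hfgraph⟩, ?_⟩
      intro x w hx hw
      show (hex (x : H)).choose = Pm (A x) + (Pm (A w) - μ • (w : H))
      have hwm : Pm (w : H) = (w : H) := by rw [hw]; exact hKm' _
      obtain ⟨y', hy'm, hy'e, hF, hR, hS⟩ := aux x hx
      refine huniq _ _ ?_ ?_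
      · rw [map_add, map_sub, hPmPm, hPmPm, map_smul, hwm]
      · rw [map_add, hR, hRl w hwm, hx, hF, hw]
        abel
  · -- backward direction
    rintro ⟨hK, Lb, hLb⟩ x hx
    set Dp : Set H := {z : H | z ∈ A.domain ∧ Pp z = z} with hDp
    have hxcl : x ∈ closure Dp := by
      have h1 : x ∈ closure (A.domain : Set H) := by
        rw [hdense.closure_eq]; trivial
      have h2 : Pp x ∈ closure ((Pp : H → H) '' (A.domain : Set H)) :=
        image_closure_subset_closure_image Pp.continuous ⟨x, h1, rfl⟩
      have h3 : (Pp : H → H) '' (A.domain : Set H) ⊆ Dp := by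
        rintro _ ⟨z, hz, rfl⟩
        exact ⟨hsplit z hz, hPpPp z⟩
      rw [← hx]
      exact closure_mono h3 h2
    set Ψ : H → H × H := fun z =>
      ((z + K z, Sb z + Gb (Pm (Lb z)) + Pm (Lb z) + μ • K z) : H × H) with hΨdef
    have hΨc : Continuous Ψ := by fun_prop
    have hmaps : Set.MapsTo Ψ Dp (A.graph : Set (H × H)) := by
      rintro z ⟨hzmem, hzp⟩
      set z' : A.domain := ⟨z, hzmem⟩ with hz'def
      have hw : K z ∈ A.domain := hK z' hzp
      set w' : A.domain := ⟨K z, hw⟩ with hw'def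
      have hw'coe : (w' : H) = K z := rfl
      have hL : Lb z = Pm (A z') + (Pm (A w') - μ • (w' : H)) :=
        hLb z' w' hzp rfl
      have hwm : Pm ((w' : H)) = (w' : H) := by rw [hw'coe]; exact hKm' z
      have hPmL : Pm (Lb z) = Lb z := by
        rw [hL, map_add, map_sub, hPmPm, hPmPm, map_smul, hwm]
      obtain ⟨y', hy'm, hy'e, hF, hR, hS⟩ := aux z' hzp
      have hsum_wy : Pm ((w' + y' : A.domain) : H) = ((w' + y' : A.domain) : H) := by
        push_cast
        rw [map_add, hwm, hy'm]
      have hveq : Pm (A (w' + y')) - μ • ((w' + y' : A.domain) : H) = Lb z := by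
        rw [A.map_add, map_add, hL]
        push_cast
        rw [smul_add, ← hy'e]
        abel
      have hG : Gb (Lb z) = Pp (A (w' + y')) := by
        rw [← hveq]
        exact hGb _ hsum_wy
      rw [SetLike.mem_coe, LinearPMap.mem_graph_iff]
      refine ⟨z' + w', ?_, ?_⟩
      · push_cast
        rfl
      · show A (z' + w') = Sb z + Gb (Pm (Lb z)) + Pm (Lb z) + μ • K z
        rw [A.map_add, hPmL, hG, hS, hL, A.map_add, map_add, hw'coe]
        conv_lhs => rw [← hsum' ((A z' : H)), ← hsum' ((A w' : H))]
        abel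
    have hin : Ψ x ∈ closure (A.graph : Set (H × H)) :=
      map_mem_closure hΨc hxcl hmaps
    have hin2 : Ψ x ∈ A.closure.graph := by
      rw [← hgraphEq]
      show Ψ x ∈ (A.graph.topologicalClosure : Set (H × H))
      rw [Submodule.topologicalClosure_coe]
      exact hin
    obtain ⟨u, h1, h2⟩ := (LinearPMap.mem_graph_iff _).mp hin2
    have : x + K x = (u : H) := h1.symm
    rw [this]
    exact u.2
end

section
/- Let A be a linear operator in H with dense domain D(A) = D⁺ ⊕ D⁻, let μ ∈ ℂ be such that A₂₂ − μ : D⁻ → H⁻ is bijective with bounded inverse, and suppose G = A₁₂(A₂₂ − μ)⁻¹, F = (A₂₂ − μ)⁻¹A₂₁ and S = A₁₁ − A₁₂F are bounded (F and S on D⁺, with bounded closures again denoted F and S), so that A has a closure Ā. Let K : H⁺ → H⁻ be bounded with graph subspace L(K) = { x₊ + Kx₊ : x₊ ∈ H⁺ } ⊆ D(Ā), and let L : H⁺ → H⁻ be the bounded closure of A₂₁ + (A₂₂ − μ)K. Then L(K) is Ā-invariant if and only if L = K(S − μ + GL); and in that case the restriction Ā|_{L(K)} satisfies Ā|_{L(K)}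 = Q⁻¹(S + GL)Q, where Q = P₊|_{L(K)} : L(K) → H⁺ is a bijection with ‖Q‖ ≤ 1 and ‖Q⁻¹‖ ≤ 1 + ‖K‖. -/
open scoped InnerProductSpace
open Filter Topology


/-- second part of Lemma 4 of the paper. Under the assumptions of
Lemma 2, if the graph subspace `L(K)` of a bounded angle operator `K` is contained in
`D(Ā)` and `Lb` is the bounded closure of `L = A₂₁ + (A₂₂ − μ)K`, then `L(K)` is
`Ā`-invariant iff `L = K(S − μ + GL)` (as operators on `H⁺`); in that case
`Ā|_{L(K)} = Q⁻¹(S + GL)Q` where `Q = P₊|_{L(K)}`, `‖Q‖ ≤ 1` and `‖Q⁻¹‖ ≤ 1 + ‖K‖`. -/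
theorem graph_subspace_invariant_iff_angle_equation
    {H : Type*} [NormedAddCommGroup H] [InnerProductSpace ℂ H] [CompleteSpace H]
    (Pp Pm : H →L[ℂ] H)
    (hPp : IsSelfAdjoint Pp) (hPm : IsSelfAdjoint Pm)
    (hPpPm : Pp.comp Pm = 0) (hPmPp : Pm.comp Pp = 0)
    (hsum : Pp + Pm = ContinuousLinearMap.id ℂ H)
    (A : H →ₗ.[ℂ] H)
    (hdense : Dense (A.domain : Set H))
    (hsplit : ∀ x ∈ A.domain, Pp x ∈ A.domain)
    (μ : ℂ)
    (Rres : H →L[ℂ] H)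
    (hRl : ∀ y : A.domain, Pm (y : H) = y → Rres (Pm (A y) - μ • (y : H)) = y)
    (hRs : ∀ z : H, Pm z = z →
      ∃ y : A.domain, Pm (y : H) = y ∧ Pm (A y) - μ • (y : H) = z)
    (Gb : H →L[ℂ] H)
    (hGb : ∀ y : A.domain, Pm (y : H) = y → Gb (Pm (A y) - μ • (y : H)) = Pp (A y))
    (Fb : H →L[ℂ] H)
    (hFb : ∀ (x y : A.domain), Pp (x : H) = x → Pm (y : H) = y →
      Pm (A y) - μ • (y : H) = Pm (A x) → Fb x = y)
    (Sb : H →L[ℂ] H)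
    (hSb : ∀ (x y : A.domain), Pp (x : H) = x → Pm (y : H) = y →
      Pm (A y) - μ • (y : H) = Pm (A x) → Sb x = Pp (A x) - Pp (A y))
    -- the angle operator K : H⁺ → H⁻ whose graph subspace lies in D(Ā)
    (K : H →L[ℂ] H) (hKp : K.comp Pp = K) (hKm : Pm.comp K = K)
    (hKdom : ∀ x : A.domain, Pp (x : H) = x → K x ∈ A.domain)
    (hsub : ∀ (x : H), Pp x = x → x + K x ∈ A.closure.domain)
    -- Lb is the bounded closure of L = A₂₁ + (A₂₂ − μ)K
    (Lb : H →L[ℂ] H)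
    (hLb : ∀ (x w : A.domain), Pp (x : H) = x → (w : H) = K x →
      Lb x = Pm (A x) + (Pm (A w) - μ • (w : H))) :
    -- L(K) is Ā-invariant iff L = K(S − μ + GL)
    ((∀ (x : H) (hx : Pp x = x), ∃ u : H, Pp u = u ∧
        A.closure ⟨x + K x, hsub x hx⟩ = u + K u) ↔
      (∀ x : H, Pp x = x → Lb x = K (Sb x - μ • x + Gb (Lb x)))) ∧
    -- and in that case Ā|_{L(K)} = Q⁻¹(S + GL)Q with ‖Q‖ ≤ 1, ‖Q⁻¹‖ ≤ 1 + ‖K‖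
    ((∀ x : H, Pp x = x → Lb x = K (Sb x - μ • x + Gb (Lb x))) →
      (∀ (x : H) (hx : Pp x = x),
        A.closure ⟨x + K x, hsub x hx⟩ =
          (Sb x + Gb (Lb x)) + K (Sb x + Gb (Lb x))) ∧
      (∀ x : H, Pp x = x → ‖Pp (x + K x)‖ ≤ ‖x + K x‖) ∧
      (∀ x : H, Pp x = x → ‖x + K x‖ ≤ (1 + ‖K‖) * ‖x‖)) := by
  classical
  -- basic projection identities
  have happ : ∀ z : H, Pp z + Pm z = z := by
    intro z
    have := DFunLike.congr_fun hsum z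
    simpa using this
  have hPpPm' : ∀ z : H, Pp (Pm z) = 0 := by
    intro z
    have := DFunLike.congr_fun hPpPm z
    simpa using this
  have hPmPp' : ∀ z : H, Pm (Pp z) = 0 := by
    intro z
    have := DFunLike.congr_fun hPmPp z
    simpa using this
  have hPp2 : ∀ z : H, Pp (Pp z) = Pp z := by
    intro z
    have := congrArg Pp (happ z)
    rwa [map_add, hPpPm', add_zero] at this
  have hPm2 : ∀ z : H, Pm (Pm z) = Pm z := by
    intro z
    have := congrArg Pm (happ z)
    rwa [map_add, hPmPp', zero_add] at this
  have hKmK : ∀ z : H, Pm (K z) = K z := by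
    intro z
    have := DFunLike.congr_fun hKm z
    simpa using this
  have hPpK : ∀ z : H, Pp (K z) = 0 := by
    intro z
    rw [← hKmK z, hPpPm']
  -- the key computation on the domain
  have main : ∀ (x : A.domain), Pp (x : H) = x →
      Pp (Sb (x : H) + Gb (Lb (x : H))) = Sb (x : H) + Gb (Lb (x : H)) ∧
      Pm (Lb (x : H) + μ • K (x : H)) = Lb (x : H) + μ • K (x : H) ∧
      (((x : H) + K (x : H), (Sb (x : H) + Gb (Lb (x : H))) + (Lb (x : H) + μ • K (x : H)))
        ∈ A.graph) := by
    intro x hx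
    set w : A.domain := ⟨K (x : H), hKdom x hx⟩ with hw_def
    have hwcoe : (w : H) = K (x : H) := rfl
    have hw : Pm (w : H) = w := by rw [hwcoe]; exact hKmK _
    obtain ⟨y, hy, hyx⟩ := hRs (Pm (A x)) (hPm2 _)
    have hLbx : Lb (x : H) = Pm (A x) + (Pm (A w) - μ • (w : H)) := hLb x w hx rfl
    have hGbx : Gb (Lb (x : H)) = Pp (A y) + Pp (A w) := by
      have hv : Pm ((y + w : A.domain) : H) = ((y + w : A.domain) : H) := by
        rw [Submodule.coe_add, map_add, hy, hw]
      have hveq : Pm (A (y + w)) - μ • ((y + w : A.domain) : H) = Lb (x : H) := by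
        rw [A.map_add, map_add, Submodule.coe_add, smul_add, hLbx, ← hyx]
        abel
      have h := hGb (y + w) hv
      rw [hveq, A.map_add, map_add] at h
      exact h
    have hSbx : Sb (x : H) = Pp (A x) - Pp (A y) := hSb x y hx hy hyx
    refine ⟨?_, ?_, ?_⟩
    · rw [hSbx, hGbx, map_add, map_add, map_sub, hPp2, hPp2, hPp2]
    · rw [hLbx, ← hwcoe, map_add, map_add, map_sub, map_smul, hPm2, hPm2, hw]
    · rw [A.mem_graph_iff]
      refine ⟨x + w, by simp [hwcoe], ?_⟩
      show A (x + w) = _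
      rw [A.map_add]
      conv_lhs => rw [← happ (A x), ← happ (A w)]
      rw [hSbx, hGbx, hLbx, ← hwcoe]
      abel
  -- A is closable
  have hclos : A.IsClosable := by
    refine ⟨(A.graph.topologicalClosure).toLinearPMap,
      (Submodule.toLinearPMap_graph_eq _ ?_).symm⟩
    rintro ⟨zv, yv⟩ hmem hz1
    simp only at hz1 ⊢
    subst hz1
    have hmem' : ((0 : H), yv) ∈ closure (A.graph : Set (H × H)) := by
      rw [← Submodule.topologicalClosure_coe]
      exact hmem
    obtain ⟨u, hu, hulim⟩ := mem_closure_iff_seq_limit.mp hmem'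
    choose d hd1 hd2 using fun n => (A.mem_graph_iff.mp (hu n))
    have hd1lim : Tendsto (fun n => ((d n : H))) atTop (𝓝 0) := by
      have : Tendsto (fun n => (u n).1) atTop (𝓝 (0 : H)) :=
        (continuous_fst.tendsto _).comp hulim
      exact this.congr fun n => (hd1 n).symm
    have hd2lim : Tendsto (fun n => A (d n)) atTop (𝓝 yv) := by
      have : Tendsto (fun n => (u n).2) atTop (𝓝 yv) :=
        (continuous_snd.tendsto _).comp hulim
      exact this.congr fun n => (hd2 n).symm
    set p : ℕ → A.domain := fun n => ⟨Pp (d n), hsplit _ (d n).2⟩ with hp_def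
    have hp : ∀ n, Pp ((p n : H)) = p n := fun n => hPp2 _
    set m : ℕ → A.domain := fun n => d n - p n with hm_def
    have hm : ∀ n, (m n : H) = Pm (d n) := by
      intro n
      have h0 : ((m n : H)) = (d n : H) - Pp (d n) := rfl
      rw [h0]
      exact sub_eq_of_eq_add' (happ ((d n : H))).symm
    have hmm : ∀ n, Pm ((m n : H)) = m n := fun n => by rw [hm n, hPm2]
    choose y hy hyeq using fun n => hRs (Pm (A (p n))) (hPm2 _)
    set r : ℕ → H := fun n => Pm (A (d n)) - μ • ((m n : H)) with hr_def
    have hdpm : ∀ n, d n = p n + m n := fun n => by simp [hm_def]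
    have hr_decomp : ∀ n, r n =
        Pm (A (p n)) + (Pm (A (m n)) - μ • ((m n : H))) := by
      intro n
      have : A (d n) = A (p n) + A (m n) := by rw [hdpm n, A.map_add]
      rw [hr_def]
      simp only
      rw [this, map_add]
      abel
    have hRr : ∀ n, Rres (r n) = (y n : H) + (m n : H) := by
      intro n
      rw [hr_decomp n, ← hyeq n, map_add, hRl (y n) (hy n), hRl (m n) (hmm n)]
    have hmlim : Tendsto (fun n => ((m n : H))) atTop (𝓝 0) := by
      have : Tendsto (fun n => Pm ((d n : H))) atTop (𝓝 (Pm 0)) :=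
        (Pm.continuous.tendsto _).comp hd1lim
      rw [map_zero] at this
      exact this.congr fun n => (hm n).symm
    have hrlim : Tendsto r atTop (𝓝 (Pm yv)) := by
      have h1 : Tendsto (fun n => Pm (A (d n))) atTop (𝓝 (Pm yv)) :=
        (Pm.continuous.tendsto _).comp hd2lim
      have h2 : Tendsto (fun n => μ • ((m n : H))) atTop (𝓝 (0 : H)) := by
        simpa using hmlim.const_smul μ
      simpa using h1.sub h2
    have hylim : Tendsto (fun n => ((y n : H))) atTop (𝓝 0) := by
      have hyFb : ∀ n, ((y n : H)) = Fb ((p n : H)) :=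
        fun n => (hFb (p n) (y n) (hp n) (hy n) (hyeq n)).symm
      have h1 : Tendsto (fun n => Fb (Pp ((d n : H)))) atTop (𝓝 (Fb (Pp 0))) :=
        ((Fb.continuous.comp Pp.continuous).tendsto _).comp hd1lim
      rw [map_zero, map_zero] at h1
      exact h1.congr fun n => (hyFb n).symm
    have hRPmyv : Rres (Pm yv) = 0 := by
      have h1 : Tendsto (fun n => Rres (r n)) atTop (𝓝 (Rres (Pm yv))) :=
        (Rres.continuous.tendsto _).comp hrlim
      have h2 : Tendsto (fun n => Rres (r n)) atTop (𝓝 (0 : H)) := by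
        have := hylim.add hmlim
        rw [add_zero] at this
        exact this.congr fun n => (hRr n).symm
      exact tendsto_nhds_unique h1 h2
    obtain ⟨w0, hw0, hw0eq⟩ := hRs (Pm yv) (hPm2 _)
    have hw0z : (w0 : H) = 0 := by rw [← hRPmyv, ← hw0eq, hRl w0 hw0]
    have hPmyv : Pm yv = 0 := by
      have hw00 : w0 = 0 := Subtype.coe_injective (by simpa using hw0z)
      rw [← hw0eq, hw00]
      simp
    have hPp_decomp : ∀ n, Pp (A (d n)) = Sb ((p n : H)) + Gb (r n) := by
      intro n
      have hAd : A (d n) = A (p n) + A (m n) := by rw [hdpm n, A.map_add]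
      have hPpAp : Pp (A (p n)) = Sb ((p n : H)) + Pp (A (y n)) := by
        rw [hSb (p n) (y n) (hp n) (hy n) (hyeq n)]
        abel
      have hPpAy : Pp (A (y n)) = Gb (Pm (A (p n))) := by
        rw [← hyeq n, hGb (y n) (hy n)]
      have hPpAm : Pp (A (m n)) = Gb (Pm (A (m n)) - μ • ((m n : H))) :=
        (hGb (m n) (hmm n)).symm
      rw [hAd, map_add, hPpAp, hPpAy, hPpAm, hr_decomp n, map_add]
      abel
    have hPpyv : Pp yv = 0 := by
      have h1 : Tendsto (fun n => Pp (A (d n))) atTop (𝓝 (Pp yv)) :=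
        (Pp.continuous.tendsto _).comp hd2lim
      have h2 : Tendsto (fun n => Sb ((p n : H)) + Gb (r n)) atTop
          (𝓝 (Sb 0 + Gb (Pm yv))) := by
        have hplim : Tendsto (fun n => ((p n : H))) atTop (𝓝 (0 : H)) := by
          have : Tendsto (fun n => Pp ((d n : H))) atTop (𝓝 (Pp 0)) :=
            (Pp.continuous.tendsto _).comp hd1lim
          rw [map_zero] at this
          exact this
        exact ((Sb.continuous.tendsto _).comp hplim).add
          ((Gb.continuous.tendsto _).comp hrlim)
      rw [hPmyv, map_zero, map_zero, add_zero] at h2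
      exact tendsto_nhds_unique (h1.congr fun n => (hPp_decomp n).symm ▸ rfl) h2
    rw [← happ yv, hPpyv, hPmyv, add_zero]
  have hclosG := hclos.graph_closure_eq_closure_graph
  -- the value of the closure on the graph subspace
  have hval : ∀ (x : H) (hx : Pp x = x),
      A.closure ⟨x + K x, hsub x hx⟩ = (Sb x + Gb (Lb x)) + (Lb x + μ • K x) := by
    intro x hx
    set Ψ : H → H × H := fun z =>
      (Pp z + K (Pp z), (Sb (Pp z) + Gb (Lb (Pp z))) + (Lb (Pp z) + μ • K (Pp z))) with hΨ
    have hΨc : Continuous Ψ := by fun_prop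
    have hmaps : Set.MapsTo Ψ (A.domain : Set H) (A.graph : Set (H × H)) := by
      intro z hz
      exact (main ⟨Pp z, hsplit z hz⟩ (hPp2 z)).2.2
    have hΨmem : Ψ x ∈ closure (A.graph : Set (H × H)) :=
      map_mem_closure hΨc (hdense x) hmaps
    have hΨx : Ψ x = (x + K x, (Sb x + Gb (Lb x)) + (Lb x + μ • K x)) := by
      rw [hΨ]; simp only [hx]
    rw [hΨx] at hΨmem
    have hg : (x + K x, (Sb x + Gb (Lb x)) + (Lb x + μ • K x)) ∈ A.closure.graph := by
      rw [← hclosG, ← SetLike.mem_coe, Submodule.topologicalClosure_coe]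
      exact hΨmem
    obtain ⟨dd, hdd1, hdd2⟩ := A.closure.mem_graph_iff.mp hg
    have hddeq : dd = ⟨x + K x, hsub x hx⟩ := Subtype.coe_injective (by simpa using hdd1)
    rw [hddeq] at hdd2
    exact hdd2
  -- range identities extended by continuity
  have hu_plus : ∀ x : H, Pp x = x → Pp (Sb x + Gb (Lb x)) = Sb x + Gb (Lb x) := by
    have heq : (fun z : H => Pp (Sb (Pp z) + Gb (Lb (Pp z)))) =
        fun z : H => Sb (Pp z) + Gb (Lb (Pp z)) := by
      refine Continuous.ext_on hdense (by fun_prop) (by fun_prop) ?_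
      intro z hz
      exact (main ⟨Pp z, hsplit z hz⟩ (hPp2 z)).1
    intro x hx
    have := congrFun heq x
    simpa [hx] using this
  have hb_minus : ∀ x : H, Pp x = x → Pm (Lb x + μ • K x) = Lb x + μ • K x := by
    have heq : (fun z : H => Pm (Lb (Pp z) + μ • K (Pp z))) =
        fun z : H => Lb (Pp z) + μ • K (Pp z) := by
      refine Continuous.ext_on hdense (by fun_prop) (by fun_prop) ?_
      intro z hz
      exact (main ⟨Pp z, hsplit z hz⟩ (hPp2 z)).2.1
    intro x hx
    have := congrFun heq x
    simpa [hx] using this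
  -- algebraic reformulation of the angle equation
  have hKexpand : ∀ x : H, K (Sb x - μ • x + Gb (Lb x)) =
      K (Sb x + Gb (Lb x)) - μ • K x := by
    intro x
    rw [map_add, map_sub, map_smul, map_add]
    abel
  constructor
  · constructor
    · intro hinv x hx
      obtain ⟨u, hu, heq⟩ := hinv x hx
      rw [hval x hx] at heq
      have hPpb : Pp (Lb x + μ • K x) = 0 := by
        rw [← hb_minus x hx, hPpPm']
      have hPpKu : Pp (K u) = 0 := hPpK u
      have hau : Sb x + Gb (Lb x) = u := by
        have h' := congrArg Pp heq
        rwa [map_add Pp (Sb x + Gb (Lb x)) (Lb x + μ • K x),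
          map_add Pp u (K u), hu_plus x hx, hPpb, hu, hPpKu, add_zero, add_zero] at h'
      have hbKu : Lb x + μ • K x = K (Sb x + Gb (Lb x)) := by
        rw [← hau] at heq
        exact add_left_cancel heq
      rw [hKexpand x, ← hbKu]
      abel
    · intro heqn x hx
      refine ⟨Sb x + Gb (Lb x), hu_plus x hx, ?_⟩
      rw [hval x hx]
      congr 1
      have h := heqn x hx
      rw [hKexpand x, eq_sub_iff_add_eq] at h
      exact h
  · intro heqn
    refine ⟨?_, ?_, ?_⟩
    · intro x hx
      rw [hval x hx]
      congr 1
      have h := heqn x hx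
      rw [hKexpand x, eq_sub_iff_add_eq] at h
      exact h
    · intro x _
      set z := x + K x
      have h1 : ⟪Pp z, Pp z⟫_ℂ = ⟪z, Pp z⟫_ℂ := by
        rw [← hPp.adjoint_eq, ContinuousLinearMap.adjoint_inner_left, hPp.adjoint_eq, hPp2]
      have h3 : ‖Pp z‖ * ‖Pp z‖ ≤ ‖z‖ * ‖Pp z‖ := by
        rw [← @inner_self_eq_norm_mul_norm ℂ, h1]
        calc RCLike.re ⟪z, Pp z⟫_ℂ ≤ ‖(⟪z, Pp z⟫_ℂ : ℂ)‖ := RCLike.re_le_norm _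
        _ ≤ ‖z‖ * ‖Pp z‖ := norm_inner_le_norm _ _
      rcases eq_or_lt_of_le (norm_nonneg (Pp z)) with h | h
      · rw [← h]; exact norm_nonneg z
      · exact le_of_mul_le_mul_right h3 h
    · intro x _
      calc ‖x + K x‖ ≤ ‖x‖ + ‖K x‖ := norm_add_le _ _
      _ ≤ ‖x‖ + ‖K‖ * ‖x‖ := by linarith [K.le_opNorm x]
      _ = (1 + ‖K‖) * ‖x‖ := by ring
end

section
/- Let A be a uniformly dissipative operator in the Krein space {H,J} (Im[Ax,x] ≥ ε(x,x) on D(A), ε > 0), with D(A) ⊇ H⁺ and −A₂₂ maximal dissipative in H⁻, and let L ⊆ D(A) be the A-invariant maximal uniformly positive subspace given by the Riesz projector onto the spectrum of A in ℂ⁺, with restriction A₊ = A|_L. If, for some μ ∈ ℂ⁺, the operator G(μ) = A₁₂(A₂₂ − μ)⁻¹ satisfies ‖G(μ)‖ = γ < 1, then ‖A₊‖ ≤ 2(‖S‖ + γ(1 − γ)⁻¹(‖S‖ + |μ|)), where S = A₁₁ − G(μ)A₂₁ is a bounded operator on H⁺. -/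
/-- Step 5 of Lemma 5 of the paper. Let `A` be uniformly dissipative
in the Krein space `{H, J}`, with `D(A) ⊇ H⁺` and `−A₂₂` maximal dissipative in `H⁻`,
and let `L ⊆ D(A)` be an `A`-invariant maximal uniformly positive subspace with bounded
restriction `A₊ = A|_L` (such as the one given by the Riesz projector onto the spectrum
of `A` in `ℂ⁺`).  If `‖G(μ)‖ = γ < 1` for some `μ ∈ ℂ⁺`, then
`‖A₊‖ ≤ 2(‖S‖ + γ(1 − γ)⁻¹(‖S‖ + |μ|))` where `S = A₁₁ − G(μ)A₂₁`. -/
theorem norm_estimate_for_restriction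
    {H : Type*} [NormedAddCommGroup H] [InnerProductSpace ℂ H] [CompleteSpace H]
    (Pp Pm : H →L[ℂ] H)
    (hPp : IsSelfAdjoint Pp) (hPm : IsSelfAdjoint Pm)
    (hPpPm : Pp.comp Pm = 0) (hPmPp : Pm.comp Pp = 0)
    (hsum : Pp + Pm = ContinuousLinearMap.id ℂ H)
    (A : H →ₗ.[ℂ] H)
    (hdense : Dense (A.domain : Set H))
    (hsplit : ∀ x ∈ A.domain, Pp x ∈ A.domain)
    -- D(A) ⊇ H⁺
    (hHp : ∀ x : H, Pp x = x → x ∈ A.domain)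
    -- A is uniformly dissipative in {H, J}
    (ε : ℝ) (hε : 0 < ε)
    (hdiss : ∀ x : A.domain, ε * ‖(x : H)‖ ^ 2 ≤ (inner ℂ (x : H) ((Pp - Pm) (A x)) : ℂ).im)
    -- −A₂₂ is maximal dissipative in H⁻
    (hdissm : ∀ y : A.domain, Pm (y : H) = y → (inner ℂ (y : H) (Pm (A y)) : ℂ).im ≤ 0)
    (hres : ∀ l : ℂ, 0 < l.im → ∃ R : H →L[ℂ] H,
      (∀ y : A.domain, Pm (y : H) = y → R (Pm (A y) - l • (y : H)) = y) ∧
      (∀ z : H, Pm z = z →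
        ∃ y : A.domain, Pm (y : H) = y ∧ Pm (A y) - l • (y : H) = z)) :
    ∀ μ : ℂ, 0 < μ.im →
      -- Gb is the bounded operator G(μ) = A₁₂(A₂₂ − μ)⁻¹ : H⁻ → H⁺
      ∀ Gb : H →L[ℂ] H, Gb.comp Pm = Gb →
        (∀ y : A.domain, Pm (y : H) = y → Gb (Pm (A y) - μ • (y : H)) = Pp (A y)) →
      -- Sb is the bounded operator S = A₁₁ − G(μ)A₂₁ on H⁺
      ∀ Sb : H →L[ℂ] H, Sb.comp Pp = Sb →
        (∀ x : A.domain, Pp (x : H) = x → Sb x = Pp (A x) - Gb (Pm (A x))) →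
      -- γ = ‖G(μ)‖ < 1
      ‖Gb‖ < 1 →
      -- L is an A-invariant maximal uniformly positive subspace of D(A),
      -- A₊ = A|_L is its bounded restriction
      ∀ L : Submodule ℂ H, IsClosed (L : Set H) →
        (∃ δ : ℝ, 0 < δ ∧ ∀ x ∈ L, δ * ‖x‖ ^ 2 ≤ (inner ℂ x ((Pp - Pm) x) : ℂ).re) →
        (∀ L' : Submodule ℂ H, L ≤ L' →
          (∃ δ : ℝ, 0 < δ ∧ ∀ x ∈ L', δ * ‖x‖ ^ 2 ≤ (inner ℂ x ((Pp - Pm) x) : ℂ).re) →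
          L' = L) →
      ∀ hL : ∀ x ∈ L, x ∈ A.domain,
        (∀ x : L, A ⟨(x : H), hL x x.2⟩ ∈ L) →
        ∀ B : L →L[ℂ] L, (∀ x : L, (B x : H) = A ⟨(x : H), hL x x.2⟩) →
          ‖B‖ ≤ 2 * (‖Sb‖ + ‖Gb‖ * (1 - ‖Gb‖)⁻¹ * (‖Sb‖ + ‖μ‖)) := by

  intro mu hmu Gb hGbP hGb Sb hSbP hS hga L hLc hLpos _hmax hL _hinv B hB
  -- basic algebra of the projections
  have hxsum : ∀ x : H, Pp x + Pm x = x := fun x => by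
    have h := congrArg (fun T : H →L[ℂ] H => T x) hsum
    simpa using h
  have hPpPm' : ∀ x : H, Pp (Pm x) = 0 := fun x => by
    have h := congrArg (fun T : H →L[ℂ] H => T x) hPpPm
    simpa using h
  have hPmPp' : ∀ x : H, Pm (Pp x) = 0 := fun x => by
    have h := congrArg (fun T : H →L[ℂ] H => T x) hPmPp
    simpa using h
  have hPp2 : ∀ x : H, Pp (Pp x) = Pp x := fun x => by
    conv_rhs => rw [← hxsum x]
    rw [map_add, hPpPm', add_zero]
  have hPm2 : ∀ x : H, Pm (Pm x) = Pm x := fun x => by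
    conv_rhs => rw [← hxsum x]
    rw [map_add, hPmPp', zero_add]
  -- re ⟪y, Pp y⟫ = ‖Pp y‖², re ⟪y, Pm y⟫ = ‖Pm y‖²
  have hrep : ∀ y : H, (inner ℂ y (Pp y) : ℂ).re = ‖Pp y‖ ^ 2 := fun y => by
    have h1 : (inner ℂ (Pp y) (Pp y) : ℂ) = inner ℂ y (Pp (Pp y)) := hPp.isSymmetric y (Pp y)
    rw [hPp2] at h1
    rw [← h1]
    exact @inner_self_eq_norm_sq ℂ _ _ _ _ (Pp y)
  have hrem : ∀ y : H, (inner ℂ y (Pm y) : ℂ).re = ‖Pm y‖ ^ 2 := fun y => by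
    have h1 : (inner ℂ (Pm y) (Pm y) : ℂ) = inner ℂ y (Pm (Pm y)) := hPm.isSymmetric y (Pm y)
    rw [hPm2] at h1
    rw [← h1]
    exact @inner_self_eq_norm_sq ℂ _ _ _ _ (Pm y)
  -- ‖Pp x‖ ≤ ‖x‖, ‖Pm x‖ ≤ ‖x‖
  have hPple : ∀ x : H, ‖Pp x‖ ≤ ‖x‖ := fun x => by
    have h1 : ‖Pp x‖ ^ 2 = (inner ℂ x (Pp x) : ℂ).re := (hrep x).symm
    have h2 : (inner ℂ x (Pp x) : ℂ).re ≤ ‖(inner ℂ x (Pp x) : ℂ)‖ := Complex.re_le_norm _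
    have h3 : ‖(inner ℂ x (Pp x) : ℂ)‖ ≤ ‖x‖ * ‖Pp x‖ := norm_inner_le_norm x (Pp x)
    nlinarith [norm_nonneg (Pp x), norm_nonneg x]
  have hPmle : ∀ x : H, ‖Pm x‖ ≤ ‖x‖ := fun x => by
    have h1 : ‖Pm x‖ ^ 2 = (inner ℂ x (Pm x) : ℂ).re := (hrem x).symm
    have h2 : (inner ℂ x (Pm x) : ℂ).re ≤ ‖(inner ℂ x (Pm x) : ℂ)‖ := Complex.re_le_norm _
    have h3 : ‖(inner ℂ x (Pm x) : ℂ)‖ ≤ ‖x‖ * ‖Pm x‖ := norm_inner_le_norm x (Pm x)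
    nlinarith [norm_nonneg (Pm x), norm_nonneg x]
  -- on L, the minus part is dominated by the plus part
  obtain ⟨δ, hδ, hpos⟩ := hLpos
  have hdom : ∀ y ∈ L, ‖Pm y‖ ≤ ‖Pp y‖ := by
    intro y hy
    have h := hpos y hy
    have hJ : (inner ℂ y ((Pp - Pm) y) : ℂ).re = ‖Pp y‖ ^ 2 - ‖Pm y‖ ^ 2 := by
      rw [ContinuousLinearMap.sub_apply, inner_sub_right, Complex.sub_re, hrep, hrem]
    rw [hJ] at h
    nlinarith [norm_nonneg (Pm y), norm_nonneg (Pp y), sq_nonneg ‖y‖, mul_nonneg hδ.le (sq_nonneg ‖y‖)]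
  -- key identity: Pp(Ax) − Gb(Pm(Ax)) = Sb(Pp x) − μ•Gb(Pm x)
  have hkeyid : ∀ x : A.domain,
      Pp (A x) - Gb (Pm (A x)) = Sb (Pp (x : H)) - mu • Gb (Pm (x : H)) := by
    intro x
    set xp : A.domain := ⟨Pp (x : H), hsplit _ x.2⟩ with hxp
    set xm : A.domain := x - xp with hxm
    have hxmc : ((xm : H)) = Pm (x : H) := by
      have hc : ((xm : H)) = (x : H) - Pp (x : H) := rfl
      exact hc.trans (eq_sub_of_add_eq' (hxsum (x : H))).symm
    have hppxp : Pp ((xp : H)) = (xp : H) := hPp2 _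
    have hpmxm : Pm ((xm : H)) = (xm : H) := by rw [hxmc]; exact hPm2 _
    have hSS := hS xp hppxp
    have hGG := hGb xm hpmxm
    have hGG' : Pp (A xm) = Gb (Pm (A xm)) - mu • Gb ((xm : H)) := by
      rw [← hGG, map_sub, map_smul]
    have hxsum' : x = xp + xm := by rw [hxm]; abel
    have hA : A x = A xp + A xm := by rw [hxsum', A.map_add]
    have hcoe : ((xp : H)) = Pp (x : H) := rfl
    calc Pp (A x) - Gb (Pm (A x))
        = (Pp (A xp) - Gb (Pm (A xp))) + (Pp (A xm) - Gb (Pm (A xm))) := by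
          rw [hA, map_add, map_add, map_add]; abel
      _ = Sb ((xp : H)) - mu • Gb ((xm : H)) := by
          rw [← hSS, hGG']; abel
      _ = Sb (Pp (x : H)) - mu • Gb (Pm (x : H)) := by rw [hcoe, hxmc]
  -- abbreviations
  set g : ℝ := ‖Gb‖ with hg
  set s : ℝ := ‖Sb‖ with hs
  set m : ℝ := ‖mu‖ with hm
  have hg0 : 0 ≤ g := norm_nonneg _
  have hs0 : 0 ≤ s := norm_nonneg _
  have hm0 : 0 ≤ m := norm_nonneg _
  have h1g : (0:ℝ) < 1 - g := by linarith
  have hinvpos : (0:ℝ) < (1 - g)⁻¹ := inv_pos.mpr h1g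
  have heq : 2 * (s + g * (1 - g)⁻¹ * (s + m)) = 2 * (1 - g)⁻¹ * (s + g * m) := by
    field_simp
    ring
  rw [heq]
  have hCnn : (0:ℝ) ≤ 2 * (1 - g)⁻¹ * (s + g * m) := by
    have : (0:ℝ) ≤ s + g * m := by nlinarith
    nlinarith
  apply B.opNorm_le_bound hCnn
  intro x
  set y : H := ((B x : L) : H) with hy
  have hyL : y ∈ L := (B x).2
  have hyA : y = A ⟨(x : H), hL _ x.2⟩ := hB x
  have hkey := hkeyid ⟨(x : H), hL _ x.2⟩
  rw [← hyA] at hkey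
  set n : ℝ := ‖(x : H)‖ with hn
  set a : ℝ := ‖Pp y‖ with ha
  set b : ℝ := ‖Pm y‖ with hb2
  have hba : b ≤ a := hdom y hyL
  have hya : ‖y‖ ≤ a + b := by
    calc ‖y‖ = ‖Pp y + Pm y‖ := by rw [hxsum]
      _ ≤ a + b := norm_add_le _ _
  -- bound on ‖Pp y − Gb (Pm y)‖
  have h3 : ‖Pp y - Gb (Pm y)‖ ≤ s * n + g * (m * n) := by
    rw [hkey]
    have h4 : ‖Sb (Pp (x : H))‖ ≤ s * n :=
      le_trans (Sb.le_opNorm _) (mul_le_mul_of_nonneg_left (hPple _) hs0)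
    have h5 : ‖Gb (Pm (x : H))‖ ≤ g * n :=
      le_trans (Gb.le_opNorm _) (mul_le_mul_of_nonneg_left (hPmle _) hg0)
    have h6 : ‖mu • Gb (Pm (x : H))‖ = m * ‖Gb (Pm (x : H))‖ := by
      rw [norm_smul]
    calc ‖Sb (Pp (x : H)) - mu • Gb (Pm (x : H))‖
        ≤ ‖Sb (Pp (x : H))‖ + ‖mu • Gb (Pm (x : H))‖ := norm_sub_le _ _
      _ ≤ s * n + g * (m * n) := by
          rw [h6]
          linarith [h4, mul_le_mul_of_nonneg_left h5 hm0]
  have h7 : a ≤ s * n + g * (m * n) + g * a := by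
    have h8 : ‖Gb (Pm y)‖ ≤ g * b := Gb.le_opNorm _
    calc a = ‖(Pp y - Gb (Pm y)) + Gb (Pm y)‖ := by rw [ha]; congr 1; abel
      _ ≤ ‖Pp y - Gb (Pm y)‖ + ‖Gb (Pm y)‖ := norm_add_le _ _
      _ ≤ s * n + g * (m * n) + g * a := by
          linarith [h3, h8, mul_le_mul_of_nonneg_left hba hg0]
  have h9 : (1 - g) * a ≤ (s + g * m) * n := by linarith [h7]
  have h13 : a ≤ (1 - g)⁻¹ * ((s + g * m) * n) := by
    have h14 : a = (1 - g)⁻¹ * ((1 - g) * a) := by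
      field_simp
    rw [h14]
    exact mul_le_mul_of_nonneg_left h9 hinvpos.le
  have h10 : ‖B x‖ = ‖y‖ := rfl
  have h11 : ‖(x : L)‖ = n := rfl
  rw [h10, h11]
  linarith [h13, hya, hba]
end

section
/- Let H be a complex Hilbert space, Ω ⊆ ℂ an open set, and let T and Tₙ (n ∈ ℕ) be bounded linear operators on H such that ‖Tₙ − T‖ → 0 as n → ∞. Suppose that the spectrum of T in Ω is discrete, i.e. every point of σ(T) ∩ Ω is an isolated point of σ(T), and that σ(Tₙ) ∩ Ω = ∅ for all n. Then σ(T) ∩ Ω = ∅. -/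
open Metric Set

/-- Perturbation bound for inverses: if `‖u⁻¹‖ ≤ C` and `‖v - u‖ * C ≤ 1/2`, then
`‖v⁻¹‖ ≤ 2 * C`. -/
lemma aux_inv_norm_le {A : Type*} [NormedRing A]
    (u v : Aˣ) (C : ℝ) (hu : ‖((u⁻¹ : Aˣ) : A)‖ ≤ C)
    (h : ‖(v : A) - (u : A)‖ * C ≤ 1/2) : ‖((v⁻¹ : Aˣ) : A)‖ ≤ 2 * C := by
  have key : ((v⁻¹ : Aˣ) : A)
      = (u⁻¹ : Aˣ) - ((v⁻¹ : Aˣ) : A) * ((v : A) - (u : A)) * ((u⁻¹ : Aˣ) : A) := by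
    have h1 : ((v⁻¹ : Aˣ) : A) * (v : A) = 1 := v.inv_mul
    have h2 : (u : A) * ((u⁻¹ : Aˣ) : A) = 1 := u.mul_inv
    calc ((v⁻¹ : Aˣ) : A) = ((v⁻¹ : Aˣ) : A) * ((u : A) * ((u⁻¹ : Aˣ) : A)) := by
          rw [h2, mul_one]
      _ = (((v⁻¹ : Aˣ) : A) * (v : A)) * ((u⁻¹ : Aˣ) : A)
            - ((v⁻¹ : Aˣ) : A) * ((v : A) - (u : A)) * ((u⁻¹ : Aˣ) : A) := by noncomm_ring
      _ = (u⁻¹ : Aˣ) - ((v⁻¹ : Aˣ) : A) * ((v : A) - (u : A)) * ((u⁻¹ : Aˣ) : A) := by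
          rw [h1, one_mul]
  have hb : ‖((v⁻¹ : Aˣ) : A)‖
      ≤ C + ‖((v⁻¹ : Aˣ) : A)‖ * (‖(v : A) - (u : A)‖ * C) := by
    calc ‖((v⁻¹ : Aˣ) : A)‖
        = ‖(u⁻¹ : Aˣ) - ((v⁻¹ : Aˣ) : A) * ((v : A) - (u : A)) * ((u⁻¹ : Aˣ) : A)‖ := by
          rw [← key]
      _ ≤ ‖((u⁻¹ : Aˣ) : A)‖ + ‖((v⁻¹ : Aˣ) : A) * ((v : A) - (u : A)) * ((u⁻¹ : Aˣ) : A)‖ :=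
          norm_sub_le _ _
      _ ≤ C + ‖((v⁻¹ : Aˣ) : A)‖ * (‖(v : A) - (u : A)‖ * C) := by
          refine add_le_add hu ?_
          calc ‖((v⁻¹ : Aˣ) : A) * ((v : A) - (u : A)) * ((u⁻¹ : Aˣ) : A)‖
              ≤ ‖((v⁻¹ : Aˣ) : A) * ((v : A) - (u : A))‖ * ‖((u⁻¹ : Aˣ) : A)‖ := norm_mul_le _ _
            _ ≤ ‖((v⁻¹ : Aˣ) : A)‖ * ‖(v : A) - (u : A)‖ * ‖((u⁻¹ : Aˣ) : A)‖ := by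
                gcongr; exact norm_mul_le _ _
            _ ≤ ‖((v⁻¹ : Aˣ) : A)‖ * (‖(v : A) - (u : A)‖ * C) := by
                rw [mul_assoc]
                gcongr
  nlinarith [norm_nonneg ((v⁻¹ : Aˣ) : A)]

/-- Lemma 6 of the paper. If bounded operators `Tₙ` converge in the
operator norm to `T`, the spectrum of `T` in an open set `Ω` is discrete, and every
`Tₙ` has no spectrum in `Ω`, then `T` has no spectrum in `Ω`. -/
theorem spectrum_empty_of_norm_lim_of_discrete
    {H : Type*} [NormedAddCommGroup H] [InnerProductSpace ℂ H] [CompleteSpace H]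
    (Ω : Set ℂ) (hΩ : IsOpen Ω)
    (T : H →L[ℂ] H) (Tn : ℕ → (H →L[ℂ] H))
    (hconv : Filter.Tendsto (fun n => ‖Tn n - T‖) Filter.atTop (nhds 0))
    (hdiscrete : ∀ z ∈ spectrum ℂ T ∩ Ω, ∃ U ∈ nhds z, U ∩ spectrum ℂ T ⊆ {z})
    (hTn : ∀ n, spectrum ℂ (Tn n) ∩ Ω = ∅) :
    spectrum ℂ T ∩ Ω = ∅ := by
  by_contra hne
  obtain ⟨z, hzT, hzΩ⟩ := Set.nonempty_iff_ne_empty.mpr hne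
  obtain ⟨U, hU, hUsub⟩ := hdiscrete z ⟨hzT, hzΩ⟩
  have hnt : Nontrivial (H →L[ℂ] H) := by
    rcases subsingleton_or_nontrivial (H →L[ℂ] H) with hs | h
    · exact absurd (isUnit_of_subsingleton _) (spectrum.mem_iff.mp hzT)
    · exact h
  -- choose a small closed ball around `z` inside `U ∩ Ω`
  obtain ⟨r, hr0, hrsub⟩ : ∃ r > 0, closedBall z r ⊆ U ∩ Ω := by
    have hmem : U ∩ Ω ∈ nhds z := Filter.inter_mem hU (hΩ.mem_nhds hzΩ)
    rcases Metric.mem_nhds_iff.mp hmem with ⟨ε, hε, hsub⟩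
    exact ⟨ε / 2, by positivity, (closedBall_subset_ball (by linarith)).trans hsub⟩
  -- sphere points are in the resolvent set of `T`
  have hsphere : ∀ w ∈ sphere z r, w ∈ resolventSet ℂ T := by
    intro w hw
    rw [resolventSet, Set.mem_setOf_eq]
    by_contra hres
    have hwspec : w ∈ spectrum ℂ T := spectrum.mem_iff.mpr hres
    have hwU : w ∈ U := (hrsub (sphere_subset_closedBall hw)).1
    have hwz : w = z := hUsub ⟨hwU, hwspec⟩
    rw [mem_sphere, hwz, dist_self] at hw
    exact hr0.ne hw
  -- bound the resolvent of `T` on the sphere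
  have hcont : ContinuousOn (resolvent T) (sphere z r) := fun w hw =>
    ((spectrum.hasDerivAt_resolvent (hsphere w hw)).continuousAt).continuousWithinAt
  obtain ⟨M, hM⟩ := (isCompact_sphere z r).exists_bound_of_continuousOn hcont
  set C : ℝ := max M 1 with hCdef
  have hC1 : (1 : ℝ) ≤ C := le_max_right _ _
  have hC0 : (0 : ℝ) < C := lt_of_lt_of_le one_pos hC1
  -- choose `n` with small perturbation
  obtain ⟨n, hn⟩ : ∃ n, ‖Tn n - T‖ < (2 * C)⁻¹ := by
    have := hconv.eventually (gt_mem_nhds (show (0:ℝ) < (2 * C)⁻¹ by positivity))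
    exact this.exists
  -- the whole closed ball lies in the resolvent set of `Tn n`
  have hres_n : ∀ w ∈ closedBall z r, w ∈ resolventSet ℂ (Tn n) := by
    intro w hw
    rw [resolventSet, Set.mem_setOf_eq]
    by_contra hres
    have : w ∈ spectrum ℂ (Tn n) ∩ Ω := ⟨spectrum.mem_iff.mpr hres, (hrsub hw).2⟩
    rw [hTn n] at this
    exact this
  -- on the sphere, the resolvent of `Tn n` is bounded by `2 * C`
  have hbound_sphere : ∀ w ∈ sphere z r, ‖resolvent (Tn n) w‖ ≤ 2 * C := by
    intro w hw
    have huT : w ∈ resolventSet ℂ T := hsphere w hw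
    have hun : w ∈ resolventSet ℂ (Tn n) := hres_n w (sphere_subset_closedBall hw)
    have hu_norm : ‖((huT.unit⁻¹ : _) : H →L[ℂ] H)‖ ≤ C := by
      have := hM w hw
      rw [spectrum.resolvent_eq huT] at this
      exact this.trans (le_max_left _ _)
    have hdiff : ((hun.unit : _) : H →L[ℂ] H) - ((huT.unit : _) : H →L[ℂ] H) = T - Tn n := by
      rw [IsUnit.unit_spec hun, IsUnit.unit_spec huT]
      abel
    have hsmall : ‖((hun.unit : _) : H →L[ℂ] H) - ((huT.unit : _) : H →L[ℂ] H)‖ * C ≤ 1/2 := by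
      rw [hdiff, norm_sub_rev]
      calc ‖Tn n - T‖ * C ≤ (2 * C)⁻¹ * C := by gcongr
        _ = 1/2 := by field_simp
    have := aux_inv_norm_le huT.unit hun.unit C hu_norm hsmall
    rwa [spectrum.resolvent_eq hun]
  -- the resolvent of `Tn n` is differentiable on the closed ball
  have hdiffOn : DifferentiableOn ℂ (resolvent (Tn n)) (closedBall z r) := fun w hw =>
    ((spectrum.hasDerivAt_resolvent (hres_n w hw)).differentiableAt).differentiableWithinAt
  have hDC : DiffContOnCl ℂ (resolvent (Tn n)) (ball z r) := by
    apply DifferentiableOn.diffContOnCl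
    rwa [closure_ball z hr0.ne']
  -- maximum modulus principle
  have hz_bound : ‖resolvent (Tn n) z‖ ≤ 2 * C := by
    refine Complex.norm_le_of_forall_mem_frontier_norm_le isBounded_ball hDC ?_ ?_
    · intro w hw
      rw [frontier_ball z hr0.ne'] at hw
      exact hbound_sphere w hw
    · exact subset_closure (mem_ball_self hr0)
  -- conclude that `z - T` is invertible
  have hzres : z ∈ resolventSet ℂ (Tn n) := hres_n z (mem_closedBall_self hr0.le)
  have hv_norm : ‖((hzres.unit⁻¹ : _) : H →L[ℂ] H)‖ ≤ 2 * C := by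
    rw [← spectrum.resolvent_eq hzres]
    exact hz_bound
  have hv_pos : 0 < ‖((hzres.unit⁻¹ : _) : H →L[ℂ] H)‖ := Units.norm_pos _
  have hnear : ‖(algebraMap ℂ (H →L[ℂ] H) z - T) - ((hzres.unit : _) : H →L[ℂ] H)‖
      < ‖((hzres.unit⁻¹ : _) : H →L[ℂ] H)‖⁻¹ := by
    have heq : (algebraMap ℂ (H →L[ℂ] H) z - T) - ((hzres.unit : _) : H →L[ℂ] H)
        = Tn n - T := by
      rw [IsUnit.unit_spec hzres]
      abel
    rw [heq]
    calc ‖Tn n - T‖ < (2 * C)⁻¹ := hn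
      _ ≤ ‖((hzres.unit⁻¹ : _) : H →L[ℂ] H)‖⁻¹ := by
          apply inv_anti₀ hv_pos hv_norm
  have : IsUnit (algebraMap ℂ (H →L[ℂ] H) z - T) :=
    (Units.ofNearby hzres.unit _ hnear).isUnit
  exact (spectrum.mem_iff.mp hzT) this
end
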